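/- arXiv:1510.01068 — 7 statements merged into one kernel-verified Lean document; each statement's English description precedes it below -/
import Mathlib

section
/- If ω ∈ Ω_K is periodic with period p (i.e., ω_{n+p} = ω_n for all n), then for every m ∈ Z the p-tuple (ω̃_m mod p, ω̃_{m+1} mod p, …, ω̃_{m+p−1} mod p) is a permutation of {0, 1, …, p−1}. -/
/-!
If `ω` has period `p`, then `n ↦ n + ω n` commutes with translation by multiples of `p`. Two
positions `a, b` whose images agree mod `p`, say `b + ω b = a + ω a + k p`, therefore satisfy
`b + ω b = (a + k p) + ω (a + k p)`, and injectivity forces `b = a + k p`. Hence `n + ω n` is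
injective mod `p` on any `p` consecutive integers, and an injection between two sets of size `p` is
a bijection.
-/

open Function

theorem Int.ModEq.of_add_periodic {ω : ℤ → ℤ} {c : ℤ} (hω : Periodic ω c)
    (hinj : Injective fun n => n + ω n) {a b : ℤ} (h : a + ω a ≡ b + ω b [ZMOD c]) :
    a ≡ b [ZMOD c] := by
  obtain ⟨k, hk⟩ := h.dvd
  have hshift : ω (a + c * k) = ω a := by simpa [mul_comm] using hω.int_mul k a
  have hb : b = a + c * k := hinj <| by simp only [hshift]; linarith
  exact Int.modEq_iff_dvd.mpr ⟨k, by linarith⟩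

theorem injective_fin_add_intCast_zmod (p : ℕ) (m : ℤ) :
    Injective fun i : Fin p => ((m + (i : ℕ) : ℤ) : ZMod p) := by
  intro i j h
  have hij : ((i : ℕ) : ℤ) ≡ (j : ℕ) [ZMOD p] :=
    Int.ModEq.add_left_cancel' m ((ZMod.intCast_eq_intCast_iff _ _ _).mp h)
  exact Fin.ext (Int.natCast_modEq_iff.mp hij |>.eq_of_lt_of_lt i.isLt j.isLt)

theorem periodic_gives_permutation_general (ω : ℤ → ℤ)
    (hbij : Function.Bijective (fun n => n + ω n))
    (p : ℕ) (hp : 0 < p) (hper : ∀ n, ω (n + p) = ω n) (m : ℤ) :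
    Function.Bijective
      (fun i : Fin p => ((ω (m + (i : ℕ)) + (m + (i : ℕ)) : ℤ) : ZMod p)) := by
  have : NeZero p := ⟨hp.ne'⟩
  refine (Fintype.bijective_iff_injective_and_card _).mpr ⟨fun i j h => ?_, by simp⟩
  apply injective_fin_add_intCast_zmod p m
  rw [ZMod.intCast_eq_intCast_iff] at h ⊢
  exact Int.ModEq.of_add_periodic hper hbij.injective (by simpa only [add_comm (ω _)] using h)

/-- If `ω ∈ Ω_K` is periodic with period `p`, then for every `m` the `p`-tuple
`(ω̃_m mod p, …, ω̃_{m+p-1} mod p)` is a permutation of `{0,…,p-1}`. -/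
theorem periodic_gives_permutation (K : ℕ) (hK : 1 ≤ K) (ω : ℤ → ℤ)
    (hω : ∀ n, ω n ∈ Finset.Icc (0 : ℤ) (K : ℤ))
    (hbij : Function.Bijective (fun n => n + ω n))
    (p : ℕ) (hp : 0 < p) (hper : ∀ n, ω (n + p) = ω n) (m : ℤ) :
    Function.Bijective
      (fun i : Fin p => ((ω (m + (i : ℕ)) + (m + (i : ℕ)) : ℤ) : ZMod p)) :=
  periodic_gives_permutation_general ω hbij p hp hper m
end

section
/- The function a : Ω_K → {0,…,K} defined by a(ω) = |{k ∈ {1,…,K} : ω_{−k} − k ≥ 0}| is shift-invariant: a(σω) = a(ω) for every ω ∈ Ω_K, where (σω)_n = ω_{n+1}. -/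
/-- The set `Ω_K`. -/
def OmegaK (K : ℕ) : Set (ℤ → ℤ) :=
  {ω | (∀ n, ω n ∈ Finset.Icc (0 : ℤ) (K : ℤ)) ∧ Function.Bijective (fun n => n + ω n)}

/-- `a(ω) = |{k = 1,…,K : ω_{-k} ≥ k}|`. -/
noncomputable def aOm (K : ℕ) (ω : ℤ → ℤ) : ℕ :=
  ((Finset.Icc (1 : ℤ) (K : ℤ)).filter (fun k => k ≤ ω (-k))).card

/-!
The map `f m = m + ω m` is a bijection of `ℤ` moving every point to the right by at most `K`,
and `a(ω)` is the number of points that `f` carries across the cut between `-1` and `0`;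
for `σω` the cut sits between `0` and `1` instead. Moving a cut from `c` to `c + 1` loses the
jump landing on `c` (present iff `f⁻¹ c ≠ c`) and gains the jump leaving `c` (present iff
`f c ≠ c`), and by injectivity these two conditions are equivalent.
-/

theorem Set.ncard_eq_of_sdiff_singleton_eq {α : Type*} {s t : Set α} {a b : α}
    (hs : s.Finite) (ht : t.Finite) (hmem : a ∈ s ↔ b ∈ t) (h : s \ {a} = t \ {b}) :
    s.ncard = t.ncard := by
  by_cases ha : a ∈ s
  · rw [← Set.ncard_sdiff_singleton_add_one ha hs,
      ← Set.ncard_sdiff_singleton_add_one (hmem.1 ha) ht, h]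
  · rw [Set.sdiff_singleton_eq_self ha, Set.sdiff_singleton_eq_self (mt hmem.2 ha)] at h
    exact congrArg Set.ncard h

def crossing (f : ℤ → ℤ) (c : ℤ) : Set ℤ := {i | i < c ∧ c ≤ f i}

section Crossing

variable {f : ℤ → ℤ}

theorem crossing_finite {K : ℕ} (hbdd : ∀ i, f i ≤ i + K) (c : ℤ) :
    (crossing f c).Finite :=
  (Set.finite_Ico (c - K) c).subset fun i ⟨hi, hfi⟩ => ⟨by linarith [hbdd i], hi⟩

variable {c p : ℤ}

theorem mem_crossing_succ_iff (hinj : f.Injective) (hle : ∀ i, i ≤ f i) (hp : f p = c) :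
    c ∈ crossing f (c + 1) ↔ p ∈ crossing f c := by
  have hpc : p ≤ c := hp ▸ hle p
  have hcfc := hle c
  have hfc : f c ≠ c ↔ p ≠ c :=
    not_congr ⟨fun h => (hinj (h.trans hp.symm)).symm, fun h => h ▸ hp⟩
  simp only [crossing, Set.mem_ofPred_eq, hp, le_refl, and_true, lt_add_one, true_and]
  omega

theorem crossing_succ_sdiff (hinj : f.Injective) (hle : ∀ i, i ≤ f i) (hp : f p = c) :
    crossing f (c + 1) \ {c} = crossing f c \ {p} := by
  ext i
  have hifi := hle i
  have hfi : f i = c ↔ i = p := ⟨fun h => hinj (h.trans hp.symm), fun h => h ▸ hp⟩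
  simp only [crossing, Set.mem_sdiff, Set.mem_ofPred_eq, Set.mem_singleton_iff]
  omega

end Crossing

theorem ncard_crossing_succ {f : ℤ → ℤ} {K : ℕ} (hf : f.Bijective) (hle : ∀ i, i ≤ f i)
    (hbdd : ∀ i, f i ≤ i + K) (c : ℤ) :
    (crossing f (c + 1)).ncard = (crossing f c).ncard := by
  obtain ⟨p, hp⟩ := hf.2 c
  exact Set.ncard_eq_of_sdiff_singleton_eq (crossing_finite hbdd _) (crossing_finite hbdd _)
    (mem_crossing_succ_iff hf.1 hle hp) (crossing_succ_sdiff hf.1 hle hp)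

theorem crossing_shift (f : ℤ → ℤ) (c : ℤ) :
    crossing (fun n => f (n + 1) - 1) c = (· + 1) ⁻¹' crossing f (c + 1) := by
  ext i
  simp only [crossing, Set.mem_preimage, Set.mem_ofPred_eq]
  omega

theorem ncard_crossing_shift (f : ℤ → ℤ) (c : ℤ) :
    (crossing (fun n => f (n + 1) - 1) c).ncard = (crossing f (c + 1)).ncard := by
  rw [crossing_shift]
  exact Set.ncard_preimage_of_injective_subset_range (add_left_injective 1)
    fun x _ => ⟨x - 1, sub_add_cancel x 1⟩

theorem aOm_eq_ncard_crossing {K : ℕ} {ω : ℤ → ℤ} (hω : ∀ n, ω n ≤ K) :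
    aOm K ω = (crossing (fun n => n + ω n) 0).ncard := by
  have hneg : crossing (fun n => n + ω n) 0 =
      Neg.neg '' ↑((Finset.Icc (1 : ℤ) K).filter fun k => k ≤ ω (-k)) := by
    ext i
    have := hω i
    simp only [crossing, Set.mem_ofPred_eq, Set.image_neg_eq_neg, Set.mem_neg, Finset.coe_filter,
      Finset.mem_Icc, neg_neg]
    omega
  rw [hneg, Set.ncard_image_of_injective _ neg_injective, Set.ncard_coe_finset, aOm]

theorem aOm_shift_invariant_general (K : ℕ) (ω : ℤ → ℤ) (hω : ω ∈ OmegaK K) :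
    aOm K (fun n => ω (n + 1)) = aOm K ω := by
  obtain ⟨hrange, hbij⟩ := hω
  have hbdd : ∀ n, 0 ≤ ω n ∧ ω n ≤ K := fun n => Finset.mem_Icc.1 (hrange n)
  have hle : ∀ n, n ≤ n + ω n := fun n => le_add_of_nonneg_right (hbdd n).1
  have hleK : ∀ n, n + ω n ≤ n + K := fun n => add_le_add_right (hbdd n).2 n
  have hshift : (fun n => n + ω (n + 1)) = fun n => (n + 1 + ω (n + 1)) - 1 := by
    funext n
    ring
  calc aOm K (fun n => ω (n + 1))
      = (crossing (fun n => n + ω n) (0 + 1)).ncard := by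
        rw [aOm_eq_ncard_crossing fun n => (hbdd (n + 1)).2, hshift]
        exact ncard_crossing_shift (fun n => n + ω n) 0
    _ = (crossing (fun n => n + ω n) 0).ncard := ncard_crossing_succ hbij hle hleK 0
    _ = aOm K ω := (aOm_eq_ncard_crossing fun n => (hbdd n).2).symm

/-- `a` is shift-invariant on `Ω_K`. -/
theorem aOm_shift_invariant (K : ℕ) (hK : 1 ≤ K) (ω : ℤ → ℤ) (hω : ω ∈ OmegaK K) :
    aOm K (fun n => ω (n + 1)) = aOm K ω :=
  aOm_shift_invariant_general K ω hω
end

section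
/- For every ω ∈ Ω_{K,l}, lim_{N→∞} (1/N) Σ_{n=0}^{N−1} ω_n = l; moreover |Σ_{n=m}^{m+N−1} ω_n − N l| < K^2 for every m ∈ Z and N ≥ 1. -/
/-- `Ω_{K,l}`. -/
def OmegaKl (K l : ℕ) : Set (ℤ → ℤ) := {ω ∈ OmegaK K | aOm K ω = l}

/-! Put `f n = n + ω n`. The number of `n < j` with `f n ≥ j` ("crossings of level `j`") does
not depend on `j`: since `f` is a bijection with `f n ≥ n`, passing from `j` to `j + 1` adds `j`
and removes the unique preimage of `j` (these coincide when `ω j = 0`). At `j = 0` this number is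
`a(ω) = l`. Counting the pairs `n < j ≤ f n` with `n` in a block of length `N` writes the block
sum as a sum of `N + K - 1` crossing counts, each at most `l` and all but `2 (K - 1)` of them
equal to `l`; hence it lies within `(K - 1) l < K²` of `N l`, and the averages tend to `l`. -/

open Finset Filter Topology

lemma sum_range_add_eq_sum_Ico {M : Type*} [AddCommMonoid M] (f : ℤ → M) (m : ℤ) (N : ℕ) :
    ∑ n ∈ range N, f (m + n) = ∑ n ∈ Ico m (m + N), f n := by
  simp [Int.Ico_eq_finset_map]

lemma tendsto_div_of_abs_sub_mul_le {f : ℕ → ℝ} {a C : ℝ}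
    (h : ∀ᶠ N in atTop, |f N - N * a| ≤ C) :
    Tendsto (fun N => f N / N) atTop (𝓝 a) := by
  have : Tendsto (fun N : ℕ => f N / N - a) atTop (𝓝 0) := by
    refine squeeze_zero_norm' ?_ (tendsto_const_div_atTop_nhds_zero_nat C)
    filter_upwards [h, eventually_ge_atTop 1] with N hfN hN
    have hN' : (0 : ℝ) < N := by exact_mod_cast hN
    rw [Real.norm_eq_abs, div_sub' hN'.ne', abs_div, abs_of_pos hN']
    exact div_le_div_of_nonneg_right (by simpa [mul_comm] using hfN) hN'.le
  simpa using this.add_const a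

def crossingsIn (S : Finset ℤ) (ω : ℤ → ℤ) (j : ℤ) : Finset ℤ :=
  S.filter fun n => n < j ∧ j ≤ n + ω n

-- For `ω ≤ K` the window `[j - K, j)` holds every `n` that crosses level `j`.
noncomputable def crossings (K : ℕ) (ω : ℤ → ℤ) (j : ℤ) : Finset ℤ :=
  crossingsIn (Ico (j - K) j) ω j

lemma aOm_le (K : ℕ) (ω : ℤ → ℤ) : aOm K ω ≤ K :=
  (card_filter_le _ _).trans (by simp)

lemma card_crossings_zero (K : ℕ) (ω : ℤ → ℤ) : #(crossings K ω 0) = aOm K ω := by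
  refine card_nbij' (fun n => -n) (fun k => -k) ?_ ?_ (fun n _ => neg_neg n) (fun k _ => neg_neg k)
  · intro n hn
    simp only [crossings, crossingsIn, mem_coe, mem_filter, mem_Ico, mem_Icc, neg_neg] at hn ⊢
    omega
  · intro k hk
    simp only [crossings, crossingsIn, mem_coe, mem_filter, mem_Ico, mem_Icc] at hk ⊢
    omega

section OmegaK

variable {K : ℕ} {ω : ℤ → ℤ}

lemma nonneg_of_mem_OmegaK (hω : ω ∈ OmegaK K) (n : ℤ) : 0 ≤ ω n :=
  (mem_Icc.mp (hω.1 n)).1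

lemma le_of_mem_OmegaK (hω : ω ∈ OmegaK K) (n : ℤ) : ω n ≤ K :=
  (mem_Icc.mp (hω.1 n)).2

lemma card_crossings_succ (hω : ω ∈ OmegaK K) (j : ℤ) :
    #(crossings K ω (j + 1)) = #(crossings K ω j) := by
  obtain ⟨n₀, hn₀ : n₀ + ω n₀ = j⟩ := hω.2.2 j
  have hpre : ∀ n, n + ω n = j ↔ n = n₀ := fun n =>
    ⟨fun h => hω.2.1 (h.trans hn₀.symm), fun h => h ▸ hn₀⟩
  have h₀ := nonneg_of_mem_OmegaK hω
  have hK := le_of_mem_OmegaK hω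
  -- Those `n ∈ [j - K, j]` with `n + ω n ≥ j` are the crossings of `j` together with `j` itself,
  -- and also the crossings of `j + 1` together with the preimage `n₀` of `j`.
  set D := (Icc (j - K) j).filter fun n => j ≤ n + ω n
  have hD : D = insert j (crossings K ω j) := by
    ext n
    simp only [D, crossings, crossingsIn, mem_insert, mem_filter, mem_Icc, mem_Ico]
    have := h₀ n
    omega
  have hD' : D = insert n₀ (crossings K ω (j + 1)) := by
    ext n
    simp only [D, crossings, crossingsIn, mem_insert, mem_filter, mem_Icc, mem_Ico]
    have := hpre n; have := h₀ n; have := hK n; have := h₀ n₀; have := hK n₀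
    omega
  have hj : j ∉ crossings K ω j := by simp [crossings, crossingsIn]
  have hn₀' : n₀ ∉ crossings K ω (j + 1) := by
    simp only [crossings, crossingsIn, mem_filter, not_and, not_le]
    omega
  have := congrArg card (hD.symm.trans hD')
  rw [card_insert_of_notMem hj, card_insert_of_notMem hn₀'] at this
  omega

lemma card_crossings (hω : ω ∈ OmegaK K) (j : ℤ) : #(crossings K ω j) = aOm K ω := by
  induction j using Int.induction_on with
  | zero => exact card_crossings_zero K ω
  | succ i ih => rw [card_crossings_succ hω, ih]
  | pred i ih => rw [← ih, ← card_crossings_succ hω, sub_add_cancel]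

lemma card_crossingsIn_le (hK : ∀ n, ω n ≤ K) (S : Finset ℤ) (j : ℤ) :
    #(crossingsIn S ω j) ≤ #(crossings K ω j) := by
  refine card_le_card fun n hn => ?_
  simp only [crossings, crossingsIn, mem_filter, mem_Ico] at hn ⊢
  have := hK n
  omega

lemma crossingsIn_eq_crossings (hK : ∀ n, ω n ≤ K) {S : Finset ℤ} {j : ℤ}
    (hS : Ico (j - K) j ⊆ S) : crossingsIn S ω j = crossings K ω j :=
  (eq_of_subset_of_card_le (filter_subset_filter _ hS) (card_crossingsIn_le hK S j)).symm

lemma sum_eq_sum_card_crossingsIn {S J : Finset ℤ} (h₀ : ∀ n ∈ S, 0 ≤ ω n)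
    (hJ : ∀ n ∈ S, Ioc n (n + ω n) ⊆ J) :
    ∑ n ∈ S, ω n = ∑ j ∈ J, (#(crossingsIn S ω j) : ℤ) := by
  have hjumps : ∀ n ∈ S, ω n = #(J.bipartiteAbove (fun n j => n < j ∧ j ≤ n + ω n) n) := by
    intro n hn
    have : J.bipartiteAbove (fun n j => n < j ∧ j ≤ n + ω n) n = Ioc n (n + ω n) := by
      ext j
      simp only [bipartiteAbove, mem_filter, ← mem_Ioc]
      exact ⟨And.right, fun h => ⟨hJ n hn h, h⟩⟩
    rw [this, Int.card_Ioc]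
    have := h₀ n hn
    omega
  rw [sum_congr rfl hjumps, ← Nat.cast_sum, sum_card_bipartiteAbove_eq_sum_card_bipartiteBelow,
    Nat.cast_sum]
  rfl

lemma abs_sum_Ico_sub_le (hω : ω ∈ OmegaK K) (hK : 1 ≤ K) (m : ℤ) (N : ℕ) :
    |∑ n ∈ Ico m (m + N), ω n - N * aOm K ω| ≤ (K - 1) * aOm K ω := by
  have hωK := le_of_mem_OmegaK hω
  set l := aOm K ω
  set S := Ico m (m + N)
  set c := fun j => (#(crossingsIn S ω j) : ℤ)
  have hsum : ∑ n ∈ S, ω n = ∑ j ∈ Ioc m (m + N - 1 + K), c j := by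
    refine sum_eq_sum_card_crossingsIn (fun n _ => nonneg_of_mem_OmegaK hω n) fun n hn j hj => ?_
    simp only [S, mem_Ico, mem_Ioc] at hn hj ⊢
    have := hωK n
    omega
  have hc_le : ∀ j, c j ≤ l := fun j => by
    simpa [c, l, card_crossings hω] using card_crossingsIn_le hωK S j
  have hc_eq : ∀ j ∈ Icc (m + K) (m + N), c j = l := fun j hj => by
    rw [mem_Icc] at hj
    change (#(crossingsIn S ω j) : ℤ) = (aOm K ω : ℤ)
    rw [← card_crossings hω j, ← crossingsIn_eq_crossings hωK
      (show Ico (j - K) j ⊆ S from Ico_subset_Ico (by omega) (by omega))]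
  have hupper : ∑ j ∈ Ioc m (m + N - 1 + K), c j ≤ (N + K - 1) * l := by
    have hcard : (#(Ioc m (m + N - 1 + K)) : ℤ) = N + K - 1 := by rw [Int.card_Ioc]; omega
    calc _ ≤ #(Ioc m (m + N - 1 + K)) • (l : ℤ) := sum_le_card_nsmul _ _ _ fun j _ => hc_le j
      _ = _ := by rw [nsmul_eq_mul, hcard]
  have hlower : (N - K + 1) * l ≤ ∑ j ∈ Ioc m (m + N - 1 + K), c j := by
    have hcard : (N - K + 1 : ℤ) ≤ #(Icc (m + K) (m + N)) := by rw [Int.card_Icc]; omega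
    calc (N - K + 1) * (l : ℤ) ≤ #(Icc (m + K) (m + N)) * l :=
          mul_le_mul_of_nonneg_right hcard (Nat.cast_nonneg l)
      _ = ∑ j ∈ Icc (m + K) (m + N), c j := by rw [sum_congr rfl hc_eq, sum_const, nsmul_eq_mul]
      _ ≤ _ := sum_le_sum_of_subset_of_nonneg
          (fun j hj => by simp only [mem_Icc, mem_Ioc] at hj ⊢; omega)
          fun _ _ _ => Nat.cast_nonneg _
  have := aOm_le K ω
  rw [abs_le]
  constructor <;> nlinarith

end OmegaK

theorem average_shift_general (K l : ℕ) (hK : 1 ≤ K)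
    (ω : ℤ → ℤ) (hω : ω ∈ OmegaKl K l) :
    Filter.Tendsto
      (fun N : ℕ => (∑ n ∈ Finset.range N, (ω (n : ℤ) : ℝ)) / N)
      Filter.atTop (nhds (l : ℝ)) ∧
    ∀ m : ℤ, ∀ N : ℕ, 1 ≤ N →
      |(∑ n ∈ Finset.range N, ω (m + n)) - (N : ℤ) * l| < (K : ℤ) ^ 2 := by
  obtain ⟨hωK, rfl⟩ := hω
  have hblock (m : ℤ) (N : ℕ) :
      |∑ n ∈ range N, ω (m + n) - N * aOm K ω| ≤ (K - 1) * aOm K ω := by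
    rw [sum_range_add_eq_sum_Ico]
    exact abs_sum_Ico_sub_le hωK hK m N
  refine ⟨tendsto_div_of_abs_sub_mul_le (C := (K - 1) * aOm K ω) (.of_forall fun N => ?_),
    fun m N _ => (hblock m N).trans_lt ?_⟩
  · simpa using (Int.cast_le (R := ℝ)).mpr (hblock 0 N)
  · have : (aOm K ω : ℤ) ≤ K := by exact_mod_cast aOm_le K ω
    nlinarith

/-- For `ω ∈ Ω_{K,l}`, the averages `(1/N) Σ_{n=0}^{N-1} ω_n` converge to `l`, and
all block sums satisfy `|Σ_{n=m}^{m+N-1} ω_n - N l| < K²`. -/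
theorem average_shift (K l : ℕ) (hK : 1 ≤ K) (hl : l ≤ K)
    (ω : ℤ → ℤ) (hω : ω ∈ OmegaKl K l) :
    Filter.Tendsto
      (fun N : ℕ => (∑ n ∈ Finset.range N, (ω (n : ℤ) : ℝ)) / N)
      Filter.atTop (nhds (l : ℝ)) ∧
    ∀ m : ℤ, ∀ N : ℕ, 1 ≤ N →
      |(∑ n ∈ Finset.range N, ω (m + n)) - (N : ℤ) * l| < (K : ℤ) ^ 2 :=
  average_shift_general K l hK ω hω
end

section
/- The SFT X_{K,l} is irreducible and aperiodic: the state e = {0,…,l−1} satisfies M(e,e) = 1, and for every state b ∈ B_{K,l} there is a path of allowed transitions from e to b and from b to e. -/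
/-- States of the SFT `X_{K,l}`: `l`-element subsets of `{0,…,K-1}`. -/
def ValidState (K l : ℕ) (a : Finset ℕ) : Prop := a ⊆ Finset.range K ∧ a.card = l

/-- Transition relation of `X_{K,l}`. -/
def Mtrans (K : ℕ) (a b : Finset ℕ) : Prop :=
  (0 ∉ a ∧ b = a.image (· - 1)) ∨
  (0 ∈ a ∧ ∃ j ∈ Finset.range K, j ∉ (a.erase 0).image (· - 1) ∧
      b = insert j ((a.erase 0).image (· - 1)))

/-- Transitions between valid states only. -/
def MtransV (K l : ℕ) (a b : Finset ℕ) : Prop :=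
  ValidState K l a ∧ ValidState K l b ∧ Mtrans K a b

/-!
Both directions are descents on the potential `∑ x ∈ b, x`, which is minimal exactly at
`e = range l`. Forwards, a state `b ≠ e` either avoids `0` and shifts down, or contains `0`
and, being different from `e`, leaves a gap `j < l - 1` in its shift that can be filled.
Backwards, `b ≠ e` has a maximum `m ≥ l`, and `b` is reached from `{0} ∪ ((b ∖ {m}) + 1)`,
whose sum is smaller by `m - (l - 1)`, by re-inserting `m`.
-/

open Finset

theorem Relation.reflTransGen_of_exists_rel_measure_lt {α : Type*} {r : α → α → Prop}
    {p : α → Prop} (f : α → ℕ) {e : α}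
    (h : ∀ x, p x → x ≠ e → ∃ y, p y ∧ r x y ∧ f y < f x) (x : α) (hx : p x) :
    ReflTransGen r x e := by
  by_cases hxe : x = e
  · exact hxe ▸ .refl
  obtain ⟨y, hy, hxy, hlt⟩ := h x hx hxe
  exact .head hxy (reflTransGen_of_exists_rel_measure_lt f h y hy)
termination_by f x

namespace Finset

theorem exists_mem_le_of_card_eq_of_ne_range {s : Finset ℕ} {n : ℕ} (hs : #s = n)
    (hne : s ≠ range n) : ∃ x ∈ s, n ≤ x := by
  by_contra! h
  exact hne (eq_of_subset_of_card_le (fun x hx => mem_range.2 (h x hx)) (by simp [hs]))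

theorem exists_lt_notMem_of_card_eq_of_ne_range {s : Finset ℕ} {n : ℕ} (hs : #s = n)
    (hne : s ≠ range n) : ∃ j < n, j ∉ s := by
  by_contra! h
  exact hne (eq_of_subset_of_card_le (fun j hj => h j (mem_range.1 hj)) (by simp [hs])).symm

theorem injOn_sub_one {s : Finset ℕ} (h0 : 0 ∉ s) : Set.InjOn (· - 1) (s : Set ℕ) := by
  intro x hx y hy hxy
  have : x ≠ 0 := ne_of_mem_of_not_mem hx h0
  have : y ≠ 0 := ne_of_mem_of_not_mem hy h0
  simp only at hxy
  omega

theorem card_image_sub_one {s : Finset ℕ} (h0 : 0 ∉ s) : #(s.image (· - 1)) = #s :=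
  card_image_of_injOn (injOn_sub_one h0)

theorem sum_image_sub_one_add_card {s : Finset ℕ} (h0 : 0 ∉ s) :
    ∑ x ∈ s.image (· - 1), x + #s = ∑ x ∈ s, x := by
  rw [sum_image (injOn_sub_one h0), card_eq_sum_ones, ← sum_add_distrib]
  refine sum_congr rfl fun x hx => ?_
  have : x ≠ 0 := ne_of_mem_of_not_mem hx h0
  omega

theorem image_sub_one_subset_range {s : Finset ℕ} {K : ℕ} (h : s ⊆ range K) :
    s.image (· - 1) ⊆ range K := by
  intro x hx
  obtain ⟨y, hy, rfl⟩ := mem_image.1 hx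
  have := mem_range.1 (h hy)
  exact mem_range.2 (by omega)

theorem image_sub_one_image_add_one (s : Finset ℕ) : (s.image (· + 1)).image (· - 1) = s := by
  rw [image_image]
  exact image_id'

end Finset

section XKl

variable {K l : ℕ}

theorem mtrans_range_self (hl : 0 < l) (hlK : l ≤ K) : Mtrans K (range l) (range l) := by
  obtain ⟨n, rfl⟩ : ∃ n, l = n + 1 := ⟨l - 1, by omega⟩
  have hshift : ((range (n + 1)).erase 0).image (· - 1) = range n := by
    rw [range_add_one', map_eq_image, erase_insert (by simp)]
    exact image_sub_one_image_add_one _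
  refine Or.inr ⟨by simp, n, mem_range.2 (by omega), ?_, ?_⟩ <;> rw [hshift]
  · exact notMem_range_self
  · exact range_add_one

theorem mtransV_image_sub_one {b : Finset ℕ} (hb : ValidState K l b) (h0 : 0 ∉ b) :
    MtransV K l b (b.image (· - 1)) :=
  ⟨hb, ⟨image_sub_one_subset_range hb.1, (card_image_sub_one h0).trans hb.2⟩,
    Or.inl ⟨h0, rfl⟩⟩

theorem mtransV_insert {b : Finset ℕ} (hb : ValidState K l b) (h0 : 0 ∈ b) {j : ℕ}
    (hj : j < K) (hjb : j ∉ (b.erase 0).image (· - 1)) :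
    MtransV K l b (insert j ((b.erase 0).image (· - 1))) := by
  have hcard : #((b.erase 0).image (· - 1)) + 1 = l := by
    rw [card_image_sub_one (notMem_erase 0 b), card_erase_add_one h0, hb.2]
  refine ⟨hb, ⟨?_, ?_⟩, Or.inr ⟨h0, j, mem_range.2 hj, hjb, rfl⟩⟩
  · exact insert_subset (mem_range.2 hj)
      (image_sub_one_subset_range ((erase_subset 0 b).trans hb.1))
  · rw [card_insert_of_notMem hjb, hcard]

theorem exists_mtransV_sum_lt {b : Finset ℕ} (hb : ValidState K l b) (hne : b ≠ range l) :
    ∃ c, ValidState K l c ∧ MtransV K l b c ∧ ∑ x ∈ c, x < ∑ x ∈ b, x := by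
  obtain ⟨x, hxb, hlx⟩ := exists_mem_le_of_card_eq_of_ne_range hb.2 hne
  have hxK : x < K := mem_range.1 (hb.1 hxb)
  have hl : 0 < l := hb.2 ▸ card_pos.2 ⟨x, hxb⟩
  by_cases h0 : 0 ∈ b
  · have h0' : 0 ∉ b.erase 0 := notMem_erase 0 b
    have htcard : #((b.erase 0).image (· - 1)) = l - 1 := by
      rw [card_image_sub_one h0', card_erase_of_mem h0, hb.2]
    have hsum : ∑ y ∈ (b.erase 0).image (· - 1), y + (l - 1) = ∑ y ∈ b, y := by
      rw [← sum_erase b rfl, ← sum_image_sub_one_add_card h0', card_erase_of_mem h0, hb.2]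
    have hgap : (b.erase 0).image (· - 1) ≠ range (l - 1) := fun ht => by
      have : x - 1 ∈ (b.erase 0).image (· - 1) :=
        mem_image_of_mem _ (mem_erase.2 ⟨by omega, hxb⟩)
      rw [ht, mem_range] at this
      omega
    obtain ⟨j, hjl, hjt⟩ := exists_lt_notMem_of_card_eq_of_ne_range htcard hgap
    have hstep := mtransV_insert hb h0 (j := j) (by omega) hjt
    refine ⟨_, hstep.2.1, hstep, ?_⟩
    rw [sum_insert hjt]
    omega
  · have hstep := mtransV_image_sub_one hb h0
    refine ⟨_, hstep.2.1, hstep, ?_⟩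
    have hsum := sum_image_sub_one_add_card h0
    rw [hb.2] at hsum
    omega

theorem exists_mtransV_to_sum_lt {b : Finset ℕ} (hb : ValidState K l b) (hne : b ≠ range l) :
    ∃ a, ValidState K l a ∧ MtransV K l a b ∧ ∑ x ∈ a, x < ∑ x ∈ b, x := by
  obtain ⟨x, hxb, hlx⟩ := exists_mem_le_of_card_eq_of_ne_range hb.2 hne
  have hbne : b.Nonempty := ⟨x, hxb⟩
  have hl : 0 < l := hb.2 ▸ card_pos.2 hbne
  obtain ⟨m, hm_def⟩ : ∃ m, b.max' hbne = m := ⟨_, rfl⟩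
  have hm : m ∈ b := hm_def ▸ max'_mem b hbne
  have hmK : m < K := mem_range.1 (hb.1 hm)
  have hlm : l ≤ m := hlx.trans (hm_def ▸ le_max' b x hxb)
  obtain ⟨u, hu_def⟩ : ∃ u, (b.erase m).image (· + 1) = u := ⟨_, rfl⟩
  have hu0 : 0 ∉ u := by simp [← hu_def]
  have hushift : u.image (· - 1) = b.erase m := hu_def ▸ image_sub_one_image_add_one _
  have hucard : #u = l - 1 := by
    rw [← card_image_sub_one hu0, hushift, card_erase_of_mem hm, hb.2]
  have huK : u ⊆ range K := by
    rw [← hu_def]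
    intro y hy
    obtain ⟨z, hz, rfl⟩ := mem_image.1 hy
    have : z < m :=
      lt_of_le_of_ne (hm_def ▸ le_max' b z (mem_of_mem_erase hz)) (ne_of_mem_erase hz)
    exact mem_range.2 (by omega)
  have hvalid : ValidState K l (insert 0 u) :=
    ⟨insert_subset (mem_range.2 (by omega)) huK,
      by rw [card_insert_of_notMem hu0, hucard]; omega⟩
  have hstep := mtransV_insert hvalid (mem_insert_self 0 u) hmK
    (by rw [erase_insert hu0, hushift]; exact notMem_erase m b)
  rw [erase_insert hu0, hushift, insert_erase hm] at hstep
  refine ⟨_, hvalid, hstep, ?_⟩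
  have hsum := sum_image_sub_one_add_card hu0
  rw [hushift, hucard] at hsum
  have : ∑ y ∈ b.erase m, y + m = ∑ y ∈ b, y := sum_erase_add b _ hm
  rw [sum_insert hu0]
  omega

end XKl

theorem XKl_irreducible_aperiodic_general (K l : ℕ) (hl : 1 ≤ l) (hlK : l ≤ K - 1) :
    Mtrans K (Finset.range l) (Finset.range l) ∧
    ∀ b : Finset ℕ, ValidState K l b →
      Relation.ReflTransGen (MtransV K l) (Finset.range l) b ∧
      Relation.ReflTransGen (MtransV K l) b (Finset.range l) :=
  ⟨mtrans_range_self hl (by omega), fun b hb =>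
    ⟨Relation.reflTransGen_swap.1 <| Relation.reflTransGen_of_exists_rel_measure_lt
        (r := Function.swap (MtransV K l)) (fun b => ∑ x ∈ b, x)
        (fun _ hb hne => exists_mtransV_to_sum_lt hb hne) b hb,
      Relation.reflTransGen_of_exists_rel_measure_lt (fun b => ∑ x ∈ b, x)
        (fun _ hb hne => exists_mtransV_sum_lt hb hne) b hb⟩⟩

/-- `X_{K,l}` is irreducible and aperiodic: the state `e = {0,…,l-1}` has a self-loop,
and every state is connected to and from `e` by paths of allowed transitions. -/
theorem XKl_irreducible_aperiodic (K l : ℕ) (hK : 2 ≤ K) (hl : 1 ≤ l) (hlK : l ≤ K - 1) :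
    Mtrans K (Finset.range l) (Finset.range l) ∧
    ∀ b : Finset ℕ, ValidState K l b →
      Relation.ReflTransGen (MtransV K l) (Finset.range l) b ∧
      Relation.ReflTransGen (MtransV K l) b (Finset.range l) :=
  XKl_irreducible_aperiodic_general K l hl hlK
end

section
/- The topological entropy of Ω_{K,l} satisfies (1 − l/K)·log(l+1) ≤ h(Ω_{K,l}) ≤ log(l+1) for all 0 < l < K; hence lim_{K→∞} h(Ω_{K,l}) = log(l+1) for every fixed l ≥ 1. -/
/-- Topological entropy of a subshift of `ℤ^ℤ`: exponential growth rate of the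
number of words of length `N`. -/
noncomputable def ent1 (Ω : Set (ℤ → ℤ)) : ℝ :=
  Filter.limsup (fun N : ℕ =>
    Real.log (Nat.card {w : Fin N → ℤ // ∃ ω ∈ Ω, ∀ i : Fin N, w i = ω ((i : ℕ) : ℤ)}) / N)
    Filter.atTop

/-! A configuration is a bijection `π n = n + ω n` moving each point forward by at most `K`, and
`a(ω)` counts the arrows crossing the cut below `0`; by bijectivity exactly `l` arrows cross every
cut.

Upper bound: the source of a target `n` is `n` itself or one of the `l` sources still pending at
the cut below `n`, so a word of length `N` is determined by the pending set at `0` and `N + K`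
choices among `l + 1` candidates.

Lower bound: the orbits of `π` are fixed points and `l` increasing chains. Conversely, labelling
each position by `0` (fixed point) or by a chain `1, …, l`, with every chain label occurring in
every `K` consecutive positions, defines a configuration in which each point jumps to the next
position with its label. Reserving the last `l` positions of every block of length `K` for the
chains leaves `(l + 1) ^ (K - l)` free labellings per block, and different labellings give
different words: at the largest position where two labellings differ, the jumps differ. -/

open Finset Filter Topology

structure IsChainLabeling (K l : ℕ) (lab : ℤ → ℕ) : Prop where
  le : ∀ n, lab n ≤ l
  exists_ahead : ∀ n c, 0 < c → c ≤ l → ∃ k : ℕ, 0 < k ∧ k ≤ K ∧ lab (n + k) = c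

noncomputable def chainJump (lab : ℤ → ℕ) (n : ℤ) : ℕ :=
  if lab n = 0 then 0 else sInf {k | 0 < k ∧ lab (n + k) = lab n}

noncomputable def chainConfig (lab : ℤ → ℕ) (n : ℤ) : ℤ := chainJump lab n

section chain

variable {K l : ℕ} {lab : ℤ → ℕ}

theorem lab_ne_of_lt_of_lt_chainJump {n m : ℤ} (hnm : n < m) (hm : m < n + chainJump lab n) :
    lab m ≠ lab n := by
  have hn : lab n ≠ 0 := by rintro hn; simp [chainJump, hn] at hm; omega
  rw [chainJump, if_neg hn] at hm
  have hk : (m - n).toNat < sInf {k : ℕ | 0 < k ∧ lab (n + k) = lab n} := by omega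
  refine fun hlab => Nat.notMem_of_lt_sInf hk ⟨by omega, ?_⟩
  rwa [show n + ((m - n).toNat : ℤ) = m by omega]

theorem chainJump_eq {n : ℤ} {k : ℕ} (hn : lab n ≠ 0) (hk0 : 0 < k) (hk : lab (n + k) = lab n)
    (hmin : ∀ j : ℕ, 0 < j → j < k → lab (n + j) ≠ lab n) : chainJump lab n = k := by
  rw [chainJump, if_neg hn]
  have hne : {j : ℕ | 0 < j ∧ lab (n + j) = lab n}.Nonempty := ⟨k, hk0, hk⟩
  refine le_antisymm (Nat.sInf_le ⟨hk0, hk⟩) (not_lt.1 fun hlt => ?_)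
  exact hmin _ (Nat.sInf_mem hne).1 hlt (Nat.sInf_mem hne).2

namespace IsChainLabeling

variable (h : IsChainLabeling K l lab)
include h

theorem chainJump_spec {n : ℤ} (hn : lab n ≠ 0) :
    0 < chainJump lab n ∧ chainJump lab n ≤ K ∧ lab (n + chainJump lab n) = lab n := by
  obtain ⟨k, hk0, hkK, hk⟩ :=
    h.exists_ahead n (lab n) (Nat.pos_of_ne_zero hn) (h.le n)
  have hmem : k ∈ {k : ℕ | 0 < k ∧ lab (n + k) = lab n} := ⟨hk0, hk⟩
  rw [chainJump, if_neg hn]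
  obtain ⟨hpos, hlab⟩ := Nat.sInf_mem ⟨k, hmem⟩
  exact ⟨hpos, (Nat.sInf_le hmem).trans hkK, hlab⟩

theorem chainJump_le (n : ℤ) : chainJump lab n ≤ K := by
  by_cases hn : lab n = 0
  · simp [chainJump, hn]
  · exact (h.chainJump_spec hn).2.1

theorem lab_add_chainJump (n : ℤ) : lab (n + chainJump lab n) = lab n := by
  by_cases hn : lab n = 0
  · simp [chainJump, hn]
  · exact (h.chainJump_spec hn).2.2

theorem chainJump_eq_zero_iff {n : ℤ} : chainJump lab n = 0 ↔ lab n = 0 := by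
  refine ⟨fun h0 => ?_, fun hn => by simp [chainJump, hn]⟩
  by_contra hn
  exact (h.chainJump_spec hn).1.ne' h0

theorem exists_prev (m : ℤ) {c : ℕ} (hc0 : 0 < c) (hcl : c ≤ l) :
    ∃ k : ℕ, 0 < k ∧ k ≤ K ∧ lab (m - k) = c ∧
      ∀ j : ℕ, 0 < j → j < k → lab (m - k + j) ≠ c := by
  classical
  obtain ⟨k₀, hk₀, hk₀K, hlab₀⟩ := h.exists_ahead (m - K - 1) c hc0 hcl
  have hk₀' : 0 < K + 1 - k₀ ∧ lab (m - (K + 1 - k₀ : ℕ)) = c := by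
    refine ⟨by omega, ?_⟩
    rwa [Nat.cast_sub (by omega), show m - ((K + 1 : ℕ) - (k₀ : ℤ)) = m - K - 1 + k₀ by
      push_cast; ring]
  have hex : ∃ k : ℕ, 0 < k ∧ lab (m - k) = c := ⟨_, hk₀'⟩
  refine ⟨Nat.find hex, (Nat.find_spec hex).1, (Nat.find_min' hex hk₀').trans (by omega),
    (Nat.find_spec hex).2, fun j hj hjk hlab => ?_⟩
  refine Nat.find_min hex (show Nat.find hex - j < Nat.find hex by omega) ⟨by omega, ?_⟩
  rwa [Nat.cast_sub hjk.le, sub_sub_eq_add_sub, add_sub_right_comm]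

theorem add_chainJump_ne {n n' : ℤ} (hlt : n < n') :
    n + chainJump lab n ≠ n' + chainJump lab n' := by
  intro heq
  have hlab : lab n' = lab n := by
    rw [← h.lab_add_chainJump n, ← h.lab_add_chainJump n', heq]
  by_cases h0 : lab n = 0
  · rw [(h.chainJump_eq_zero_iff).2 h0, (h.chainJump_eq_zero_iff).2 (hlab.trans h0)] at heq
    omega
  · have := (h.chainJump_spec (hlab ▸ h0 : lab n' ≠ 0)).1
    exact lab_ne_of_lt_of_lt_chainJump hlt (by omega) hlab

theorem bijective_add_chainConfig : Function.Bijective (fun n => n + chainConfig lab n) := by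
  refine ⟨fun n n' heq => ?_, fun m => ?_⟩
  · rcases lt_trichotomy n n' with hlt | rfl | hgt
    · exact absurd heq (h.add_chainJump_ne hlt)
    · rfl
    · exact absurd heq.symm (h.add_chainJump_ne hgt)
  by_cases hm : lab m = 0
  · exact ⟨m, by simp [chainConfig, (h.chainJump_eq_zero_iff).2 hm]⟩
  obtain ⟨k, hk0, -, hk, hmin⟩ := h.exists_prev m (Nat.pos_of_ne_zero hm) (h.le m)
  have hjump : chainJump lab (m - k) = k :=
    chainJump_eq (hk ▸ hm) hk0 (by rw [hk, sub_add_cancel]) (fun j hj hjk => hk ▸ hmin j hj hjk)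
  exact ⟨m - k, by simp [chainConfig, hjump]⟩

theorem aOm_chainConfig : aOm K (chainConfig lab) = l := by
  have hfilter {k : ℤ} : k ∈ (Icc (1 : ℤ) K).filter (fun k => k ≤ chainConfig lab (-k)) ↔
      1 ≤ k ∧ k ≤ K ∧ k ≤ chainJump lab (-k) := by
    rw [Finset.mem_filter, Finset.mem_Icc]; simp only [chainConfig, and_assoc]
  refine (card_bij (fun k _ => lab (-k)) (fun k hk => ?_) (fun k₁ hk₁ k₂ hk₂ hlab => ?_)
    (fun c hc => ?_)).trans (Nat.card_Icc 1 l)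
  · obtain ⟨hk1, -, hkj⟩ := hfilter.1 hk
    have hne : lab (-k) ≠ 0 := fun h0 => by rw [(h.chainJump_eq_zero_iff).2 h0] at hkj; omega
    exact Finset.mem_Icc.2 ⟨Nat.pos_of_ne_zero hne, h.le _⟩
  · obtain ⟨hk₁, -, hkj₁⟩ := hfilter.1 hk₁
    obtain ⟨hk₂, -, hkj₂⟩ := hfilter.1 hk₂
    by_contra hne
    rcases lt_or_gt_of_ne hne with hlt | hlt
    · exact lab_ne_of_lt_of_lt_chainJump (by omega) (by omega) hlab
    · exact lab_ne_of_lt_of_lt_chainJump (by omega) (by omega) hlab.symm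
  · obtain ⟨hc0, hcl⟩ := Finset.mem_Icc.1 hc
    obtain ⟨k, hk0, hkK, hk, hmin⟩ := h.exists_prev 0 hc0 hcl
    rw [zero_sub] at hk hmin
    have hjump : k ≤ chainJump lab (-k) := not_lt.1 fun hlt => by
      obtain ⟨hpos, -, hlab⟩ := h.chainJump_spec (by rw [hk]; omega)
      exact hmin _ hpos hlt (hlab.trans hk)
    exact ⟨k, hfilter.2 ⟨by omega, by omega, by omega⟩, hk⟩

theorem chainConfig_mem : chainConfig lab ∈ OmegaKl K l :=
  ⟨⟨fun n => Finset.mem_Icc.2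
      ⟨by simp [chainConfig], by simpa [chainConfig] using h.chainJump_le n⟩,
    h.bijective_add_chainConfig⟩, h.aOm_chainConfig⟩

end IsChainLabeling

theorem chainConfig_ne {lab₁ lab₂ : ℤ → ℕ} (h₁ : IsChainLabeling K l lab₁)
    (h₂ : IsChainLabeling K l lab₂) {n : ℤ} (hn : lab₁ n ≠ lab₂ n)
    (habove : ∀ m, n < m → lab₁ m = lab₂ m) : chainConfig lab₁ n ≠ chainConfig lab₂ n := by
  intro heq
  have hj : chainJump lab₁ n = chainJump lab₂ n := Nat.cast_injective heq
  rcases Nat.eq_zero_or_pos (chainJump lab₁ n) with h0 | hpos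
  · exact hn (((h₁.chainJump_eq_zero_iff).1 h0).trans ((h₂.chainJump_eq_zero_iff).1 (hj ▸ h0)).symm)
  · refine hn ?_
    rw [← h₁.lab_add_chainJump n, ← h₂.lab_add_chainJump n, ← hj]
    exact habove _ (by omega)

theorem eq_of_chainConfig_eq {lab₁ lab₂ : ℤ → ℕ} (h₁ : IsChainLabeling K l lab₁)
    (h₂ : IsChainLabeling K l lab₂) (hbdd : BddAbove {n | lab₁ n ≠ lab₂ n})
    (heq : ∀ n, lab₁ n ≠ lab₂ n → chainConfig lab₁ n = chainConfig lab₂ n) : lab₁ = lab₂ := by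
  by_contra hne
  obtain ⟨b, hb⟩ := hbdd
  obtain ⟨n, hn, hmax⟩ := Int.exists_greatest_of_bdd ⟨b, fun z hz => hb hz⟩
    (Function.ne_iff.1 hne)
  refine chainConfig_ne h₁ h₂ hn (fun m hm => ?_) (heq n hn)
  by_contra hm'
  exact absurd (hmax m hm') (not_le.2 hm)

end chain

section block

variable {K l : ℕ}

def blockLabel (K l : ℕ) (free : ℤ → ℕ → ℕ) (n : ℤ) : ℕ :=
  if (n % K).toNat < K - l then free (n / K) (n % K).toNat else (n % K).toNat + l + 1 - K

theorem blockLabel_mul_add (hK : 0 < K) (free : ℤ → ℕ → ℕ) (q : ℤ) {r : ℕ} (hr : r < K) :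
    blockLabel K l free (K * q + r) = if r < K - l then free q r else r + l + 1 - K := by
  have hK' : (K : ℤ) ≠ 0 := by exact_mod_cast hK.ne'
  have hmod : ((K * q + r) % K).toNat = r := by
    rw [Int.mul_add_emod_self_left, Int.emod_eq_of_lt (by omega) (by omega)]; rfl
  have hdiv : (K * q + r) / K = q := by
    rw [Int.mul_add_ediv_left _ _ hK', Int.ediv_eq_zero_of_lt (by omega) (by omega), add_zero]
  simp only [blockLabel, hmod, hdiv]

theorem isChainLabeling_blockLabel (hK : 0 < K) (hlK : l ≤ K) {free : ℤ → ℕ → ℕ}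
    (hfree : ∀ q r, free q r ≤ l) : IsChainLabeling K l (blockLabel K l free) := by
  have hr (n : ℤ) : 0 ≤ n % K ∧ n % K < K :=
    ⟨Int.emod_nonneg n (by omega), Int.emod_lt_of_pos n (by omega)⟩
  refine ⟨fun n => ?_, fun n c hc0 hcl => ?_⟩
  · unfold blockLabel
    split_ifs
    · exact hfree _ _
    · have := hr n; omega
  -- the `c`-th of the last `l` positions of each block is labelled `c`
  set p : ℕ := K - l + c - 1
  have hp : p < K := by omega
  have hlab (q : ℤ) : blockLabel K l free (K * q + p) = c := by
    rw [blockLabel_mul_add hK free q hp, if_neg (by omega)]; omega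
  have hn := Int.mul_ediv_add_emod n K
  obtain ⟨hr0, hrK⟩ := hr n
  by_cases hpr : n % K < p
  · refine ⟨(p - n % K).toNat, by omega, by omega, ?_⟩
    rw [← hlab (n / K)]; congr 1; omega
  · refine ⟨(K + p - n % K).toNat, by omega, by omega, ?_⟩
    rw [← hlab (n / K + 1)]; congr 1; rw [mul_add]; omega

end block

section lower

variable {K l B : ℕ}

def blockChoice (d : Fin B → Fin (K - l) → Fin (l + 1)) (q : ℤ) (r : ℕ) : ℕ :=
  if h : 0 ≤ q ∧ q < B ∧ r < K - l then d ⟨q.toNat, by omega⟩ ⟨r, h.2.2⟩ else 0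

theorem blockChoice_le (d : Fin B → Fin (K - l) → Fin (l + 1)) (q : ℤ) (r : ℕ) :
    blockChoice d q r ≤ l := by
  unfold blockChoice
  split_ifs
  · exact Nat.lt_succ_iff.1 (Fin.isLt _)
  · exact Nat.zero_le l

theorem blockLabel_blockChoice_ne (hK : 0 < K) {d₁ d₂ : Fin B → Fin (K - l) → Fin (l + 1)} {n : ℤ}
    (hn : blockLabel K l (blockChoice d₁) n ≠ blockLabel K l (blockChoice d₂) n) :
    0 ≤ n ∧ n < B * K := by
  have hdm := Int.mul_ediv_add_emod n K
  have hr : 0 ≤ n % K ∧ n % K < K :=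
    ⟨Int.emod_nonneg n (by omega), Int.emod_lt_of_pos n (by omega)⟩
  have hq : 0 ≤ n / K ∧ n / K < B := by
    by_contra hq
    have hnot : ¬(0 ≤ n / K ∧ n / K < B ∧ (n % K).toNat < K - l) := fun h => hq ⟨h.1, h.2.1⟩
    simp only [blockLabel, blockChoice, dif_neg hnot] at hn
    exact hn rfl
  have : (K : ℤ) * (n / K + 1) ≤ K * B := mul_le_mul_of_nonneg_left (by omega) (by omega)
  constructor <;> nlinarith

theorem blockChoice_injective (hK : 0 < K) :
    Function.Injective fun d : Fin B → Fin (K - l) → Fin (l + 1) =>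
      blockLabel K l (blockChoice d) := by
  intro d₁ d₂ heq
  funext q r
  have h := congrFun heq (K * (q : ℕ) + (r : ℕ))
  have hr : (r : ℕ) < K := by omega
  simp only [blockLabel_mul_add hK _ _ hr, blockChoice, Nat.cast_nonneg, Nat.cast_lt, q.isLt,
    r.isLt, and_self, dite_true, Int.toNat_natCast] at h
  exact Fin.ext (by simpa using h)

end lower

section pending

variable {K l : ℕ} {ω : ℤ → ℤ} {n : ℤ}

noncomputable def pending (K : ℕ) (ω : ℤ → ℤ) (n : ℤ) : Finset ℤ :=
  (Finset.Icc (n - K) (n - 1)).filter fun m => n ≤ m + ω m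

noncomputable def source (ω : ℤ → ℤ) : ℤ → ℤ := Function.invFun fun m => m + ω m

noncomputable def sourceRank (K : ℕ) (ω : ℤ → ℤ) (n : ℤ) : ℕ :=
  ((insert n (pending K ω n)).filter (· < source ω n)).card

theorem mem_pending {m : ℤ} :
    m ∈ pending K ω n ↔ n - K ≤ m ∧ m ≤ n - 1 ∧ n ≤ m + ω m := by
  rw [pending, Finset.mem_filter, Finset.mem_Icc, and_assoc]

theorem self_notMem_pending : n ∉ pending K ω n := fun h => by
  have := mem_pending.1 h; omega

theorem card_pending_zero : (pending K ω 0).card = aOm K ω := by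
  refine card_bij (fun m _ => -m) (fun m hm => ?_) (fun _ _ _ _ h => neg_injective h)
    (fun k hk => ⟨-k, ?_, neg_neg k⟩)
  · obtain ⟨h1, h2, h3⟩ := mem_pending.1 hm
    simp only [Finset.mem_filter, Finset.mem_Icc, neg_neg]
    omega
  · simp only [Finset.mem_filter, Finset.mem_Icc] at hk
    exact mem_pending.2 (by omega)

variable (hω : ω ∈ OmegaK K)
include hω

theorem bounds_of_mem_OmegaK (m : ℤ) : 0 ≤ ω m ∧ ω m ≤ K := Finset.mem_Icc.1 (hω.1 m)

theorem source_add : source ω n + ω (source ω n) = n :=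
  Function.rightInverse_invFun hω.2.2 n

theorem source_mem : source ω n ∈ insert n (pending K ω n) := by
  have h := source_add hω (n := n)
  have := bounds_of_mem_OmegaK hω (source ω n)
  rcases eq_or_ne (source ω n) n with heq | hne
  · rw [heq]; exact Finset.mem_insert_self _ _
  · exact Finset.mem_insert_of_mem (mem_pending.2 (by omega))

theorem pending_succ : pending K ω (n + 1) = (insert n (pending K ω n)).erase (source ω n) := by
  ext m
  have hm := bounds_of_mem_OmegaK hω m
  have hsrc : m = source ω n ↔ m + ω m = n :=
    ⟨fun h => h ▸ source_add hω, fun h => hω.2.1 (h.trans (source_add hω).symm)⟩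
  simp only [Finset.mem_erase, Finset.mem_insert, mem_pending, ne_eq, hsrc]
  omega

theorem card_pending (n : ℤ) : (pending K ω n).card = aOm K ω := by
  have hstep (n : ℤ) : (pending K ω (n + 1)).card = (pending K ω n).card := by
    rw [pending_succ hω, card_erase_of_mem (source_mem hω),
      card_insert_of_notMem self_notMem_pending, Nat.add_sub_cancel]
  induction n using Int.induction_on with
  | zero => exact card_pending_zero
  | succ k ih => rw [hstep, ih]
  | pred k ih => rw [← hstep, sub_add_cancel, ih]

theorem sourceRank_lt (ha : aOm K ω = l) : sourceRank K ω n < l + 1 := by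
  rw [sourceRank, ← ha, ← card_pending hω n, ← card_insert_of_notMem self_notMem_pending]
  exact card_lt_card (filter_ssubset.2 ⟨_, source_mem hω, lt_irrefl _⟩)

end pending

theorem Finset.eq_of_card_filter_lt_eq {α : Type*} [LinearOrder α] {s : Finset α} {x y : α}
    (hx : x ∈ s) (hy : y ∈ s) (h : (s.filter (· < x)).card = (s.filter (· < y)).card) :
    x = y := by
  have key {a b : α} (ha : a ∈ s) (hab : a < b) :
      (s.filter (· < a)).card < (s.filter (· < b)).card :=
    card_lt_card ⟨fun c hc => mem_filter.2 ⟨(mem_filter.1 hc).1, (mem_filter.1 hc).2.trans hab⟩,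
      fun hsub => by simpa using hsub (mem_filter.2 ⟨ha, hab⟩)⟩
  rcases lt_trichotomy x y with hxy | hxy | hxy
  · exact absurd h (key hx hxy).ne
  · exact hxy
  · exact absurd h (key hy hxy).ne'

section determination

variable {K l : ℕ} {ω₁ ω₂ : ℤ → ℤ} (h₁ : ω₁ ∈ OmegaK K) (h₂ : ω₂ ∈ OmegaK K)
include h₁ h₂

theorem source_eq_of_pending_eq {n : ℤ} (hP : pending K ω₁ n = pending K ω₂ n)
    (hr : sourceRank K ω₁ n = sourceRank K ω₂ n) : source ω₁ n = source ω₂ n := by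
  rw [sourceRank, sourceRank, hP] at hr
  exact Finset.eq_of_card_filter_lt_eq (hP ▸ source_mem h₁) (source_mem h₂) hr

theorem pending_eq_of_sourceRank_eq (h0 : pending K ω₁ 0 = pending K ω₂ 0) {M : ℕ}
    (hr : ∀ t : ℕ, t < M → sourceRank K ω₁ t = sourceRank K ω₂ t) :
    ∀ t : ℕ, t ≤ M → pending K ω₁ t = pending K ω₂ t := by
  intro t
  induction t with
  | zero => exact fun _ => h0
  | succ t ih =>
    intro ht
    have hP := ih (by omega)
    rw [Nat.cast_succ, pending_succ h₁, pending_succ h₂, hP,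
      source_eq_of_pending_eq h₁ h₂ hP (hr t (by omega))]

theorem eq_of_sourceRank_eq (h0 : pending K ω₁ 0 = pending K ω₂ 0) {N : ℕ}
    (hr : ∀ t : ℕ, t < N + K → sourceRank K ω₁ t = sourceRank K ω₂ t) {i : ℕ} (hi : i < N) :
    ω₁ i = ω₂ i := by
  obtain ⟨hω0, hωK⟩ := bounds_of_mem_OmegaK h₁ i
  set t := (i + ω₁ i).toNat
  have ht : (t : ℤ) = i + ω₁ i := by omega
  have hsrc₁ : source ω₁ t = i := by rw [ht]; exact Function.leftInverse_invFun h₁.2.1 _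
  have hsrc : source ω₁ t = source ω₂ t :=
    source_eq_of_pending_eq h₁ h₂ (pending_eq_of_sourceRank_eq h₁ h₂ h0 hr t (by omega))
      (hr t (by omega))
  have := source_add h₂ (n := t)
  rw [← hsrc, hsrc₁] at this
  omega

end determination

def Words (Ω : Set (ℤ → ℤ)) (N : ℕ) : Type :=
  {w : Fin N → ℤ // ∃ ω ∈ Ω, ∀ i : Fin N, w i = ω ((i : ℕ) : ℤ)}

def Words.ofMem {Ω : Set (ℤ → ℤ)} {ω : ℤ → ℤ} (hω : ω ∈ Ω) (N : ℕ) : Words Ω N :=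
  ⟨fun i => ω ((i : ℕ) : ℤ), ω, hω, fun _ => rfl⟩

section counting

variable {K l N : ℕ}

abbrev WordCode (K l N : ℕ) : Type :=
  (Finset.Icc (-(K : ℤ)) (-1)).powerset × (Fin (N + K) → Fin (l + 1))

theorem card_wordCode : Nat.card (WordCode K l N) = 2 ^ K * (l + 1) ^ (N + K) := by
  simp [Nat.card_eq_fintype_card, Finset.card_powerset]

theorem pending_zero_subset (ω : ℤ → ℤ) : pending K ω 0 ⊆ Finset.Icc (-(K : ℤ)) (-1) :=
  fun m hm => Finset.mem_Icc.2 (by have := mem_pending.1 hm; omega)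

noncomputable def wordCode (w : Words (OmegaKl K l) N) : WordCode K l N :=
  let hω := w.2.choose_spec.1
  (⟨pending K w.2.choose 0, Finset.mem_powerset.2 (pending_zero_subset _)⟩,
    fun t => ⟨sourceRank K w.2.choose t, sourceRank_lt hω.1 hω.2⟩)

theorem wordCode_injective : Function.Injective (wordCode (K := K) (l := l) (N := N)) := by
  intro w₁ w₂ heq
  obtain ⟨⟨h₁, -⟩, hw₁⟩ := w₁.2.choose_spec
  obtain ⟨⟨h₂, -⟩, hw₂⟩ := w₂.2.choose_spec
  simp only [wordCode, Prod.mk.injEq, Subtype.mk.injEq, funext_iff, Fin.ext_iff] at heq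
  refine Subtype.ext (funext fun i => ?_)
  rw [hw₁, hw₂]
  exact eq_of_sourceRank_eq h₁ h₂ heq.1 (fun t ht => heq.2 ⟨t, ht⟩) i.isLt

instance : Finite (Words (OmegaKl K l) N) := Finite.of_injective _ wordCode_injective

theorem card_words_le : Nat.card (Words (OmegaKl K l) N) ≤ 2 ^ K * (l + 1) ^ K * (l + 1) ^ N := by
  calc Nat.card (Words (OmegaKl K l) N) ≤ Nat.card (WordCode K l N) :=
        Nat.card_le_card_of_injective _ wordCode_injective
    _ = 2 ^ K * (l + 1) ^ K * (l + 1) ^ N := by rw [card_wordCode]; ring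

theorem pow_le_card_words (hK : 0 < K) (hlK : l ≤ K) {B : ℕ} (hBN : B * K ≤ N) :
    (l + 1) ^ ((K - l) * B) ≤ Nat.card (Words (OmegaKl K l) N) := by
  have hlab (d : Fin B → Fin (K - l) → Fin (l + 1)) :=
    isChainLabeling_blockLabel hK hlK (blockChoice_le d)
  let F d := Words.ofMem (hlab d).chainConfig_mem N
  have hF : Function.Injective F := fun d₁ d₂ heq => by
    refine blockChoice_injective hK (eq_of_chainConfig_eq (hlab d₁) (hlab d₂)
      ⟨B * K, fun n hn => (blockLabel_blockChoice_ne hK hn).2.le⟩ fun n hn => ?_)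
    obtain ⟨hn0, hnB⟩ := blockLabel_blockChoice_ne hK hn
    have := congrFun (congrArg Subtype.val heq) ⟨n.toNat, by
      have : (B : ℤ) * K ≤ N := by exact_mod_cast hBN
      omega⟩
    simpa [F, Words.ofMem, Int.toNat_of_nonneg hn0] using this
  calc (l + 1) ^ ((K - l) * B) = Nat.card (Fin B → Fin (K - l) → Fin (l + 1)) := by
        simp [Nat.card_eq_fintype_card, ← pow_mul, mul_comm]
    _ ≤ _ := Nat.card_le_card_of_injective F hF

end counting

section growth

variable {Ω : Set (ℤ → ℤ)}

noncomputable def growthRate (Ω : Set (ℤ → ℤ)) (N : ℕ) : ℝ :=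
  Real.log (Nat.card (Words Ω N)) / N

theorem growthRate_nonneg (N : ℕ) : 0 ≤ growthRate Ω N :=
  div_nonneg (Real.log_natCast_nonneg _) N.cast_nonneg

theorem growthRate_le {C b : ℕ} (hC : 0 < C) (hb : 0 < b) {N : ℕ}
    (h : Nat.card (Words Ω N) ≤ C * b ^ N) : growthRate Ω N ≤ Real.log C / N + Real.log b := by
  have hlogC := Real.log_natCast_nonneg C
  have hlogb := Real.log_natCast_nonneg b
  rcases N.eq_zero_or_pos with rfl | hN
  · simpa [growthRate] using hlogb
  have hlog : Real.log (Nat.card (Words Ω N)) ≤ Real.log C + N * Real.log b := by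
    rcases (Nat.card (Words Ω N)).eq_zero_or_pos with h0 | hpos
    · rw [h0, Nat.cast_zero, Real.log_zero]; positivity
    · calc Real.log (Nat.card (Words Ω N)) ≤ Real.log ((C * b ^ N : ℕ) : ℝ) :=
            Real.log_le_log (by exact_mod_cast hpos) (by exact_mod_cast h)
        _ = Real.log C + N * Real.log b := by
            push_cast
            rw [Real.log_mul (by positivity) (by positivity), Real.log_pow]
  rw [growthRate, div_le_iff₀ (by positivity), add_mul, div_mul_cancel₀ _ (by positivity)]
  linarith

theorem tendsto_log_div_add_log (C b : ℕ) :
    Tendsto (fun N : ℕ => Real.log C / N + Real.log b) atTop (𝓝 (Real.log b)) := by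
  simpa using (tendsto_const_div_atTop_nhds_zero_nat (Real.log C)).add_const (Real.log b)

theorem ent1_le_log_of_card_le {C b : ℕ} (hC : 0 < C) (hb : 0 < b)
    (h : ∀ N, Nat.card (Words Ω N) ≤ C * b ^ N) : ent1 Ω ≤ Real.log b :=
  calc ent1 Ω = limsup (growthRate Ω) atTop := rfl
    _ ≤ limsup (fun N : ℕ => Real.log C / N + Real.log b) atTop :=
      limsup_le_limsup (Eventually.of_forall fun N => growthRate_le hC hb (h N))
        (isBoundedUnder_of ⟨0, growthRate_nonneg⟩).isCoboundedUnder_le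
        (tendsto_log_div_add_log C b).isBoundedUnder_le
    _ = Real.log b := (tendsto_log_div_add_log C b).limsup_eq

theorem le_ent1_of_pow_le_card {C b : ℕ} (hC : 0 < C) (hb : 0 < b)
    (h : ∀ N, Nat.card (Words Ω N) ≤ C * b ^ N) {a : ℕ} (ha : 0 < a) {g : ℕ → ℕ} {α : ℝ}
    (hg : Tendsto (fun N => (g N : ℝ) / N) atTop (𝓝 α))
    (hlow : ∀ N, a ^ g N ≤ Nat.card (Words Ω N)) : α * Real.log a ≤ ent1 Ω := by
  have hv := hg.mul_const (Real.log a)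
  have hvu (N : ℕ) : (g N : ℝ) / N * Real.log a ≤ growthRate Ω N := by
    rw [growthRate, div_mul_eq_mul_div, ← Real.log_pow]
    exact div_le_div_of_nonneg_right
      (Real.log_le_log (by positivity) (by exact_mod_cast hlow N)) N.cast_nonneg
  calc α * Real.log a = limsup (fun N => (g N : ℝ) / N * Real.log a) atTop := hv.limsup_eq.symm
    _ ≤ limsup (growthRate Ω) atTop :=
      limsup_le_limsup (Eventually.of_forall hvu) hv.isBoundedUnder_ge.isCoboundedUnder_le
        ((tendsto_log_div_add_log C b).isBoundedUnder_le.mono_le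
          (Eventually.of_forall fun N => growthRate_le hC hb (h N)))

end growth

theorem tendsto_nat_div_div_atTop {K : ℕ} (hK : 0 < K) :
    Tendsto (fun N : ℕ => ((N / K : ℕ) : ℝ) / N) atTop (𝓝 (1 / K)) := by
  have hlim := ((tendsto_mod_div_atTop_nhds_zero_nat hK).const_sub 1).div_const (K : ℝ)
  rw [sub_zero] at hlim
  refine hlim.congr' ((eventually_gt_atTop 0).mono fun N hN => ?_)
  have hdm : (K : ℝ) * (N / K : ℕ) + (N % K : ℕ) = N := by exact_mod_cast Nat.div_add_mod N K
  field_simp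
  linarith

section entropy

variable {K l : ℕ}

theorem ent1_OmegaKl_le (K l : ℕ) : ent1 (OmegaKl K l) ≤ Real.log (l + 1) := by
  simpa using ent1_le_log_of_card_le (C := 2 ^ K * (l + 1) ^ K) (b := l + 1) (by positivity)
    (by omega) fun N => card_words_le

theorem le_ent1_OmegaKl (hK : 0 < K) (hlK : l ≤ K) :
    (1 - (l : ℝ) / K) * Real.log (l + 1) ≤ ent1 (OmegaKl K l) := by
  have hg : Tendsto (fun N : ℕ => (((K - l) * (N / K) : ℕ) : ℝ) / N) atTop
      (𝓝 (1 - (l : ℝ) / K)) := by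
    have h := (tendsto_nat_div_div_atTop hK).const_mul ((K - l : ℕ) : ℝ)
    rw [show ((K - l : ℕ) : ℝ) * (1 / K) = 1 - l / K by
      rw [Nat.cast_sub hlK]; field_simp] at h
    simpa only [Nat.cast_mul, mul_div_assoc] using h
  exact_mod_cast le_ent1_of_pow_le_card (C := 2 ^ K * (l + 1) ^ K) (b := l + 1) (by positivity)
    (by omega) (fun N => card_words_le) (a := l + 1) (by omega) hg
    fun N => pow_le_card_words hK hlK (Nat.div_mul_le_self N K)

end entropy

/-- `(1 - l/K)·log(l+1) ≤ h(Ω_{K,l}) ≤ log(l+1)`, hence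
`h(Ω_{K,l}) → log(l+1)` as `K → ∞`. -/
theorem entropy_bounds :
    (∀ K l : ℕ, 0 < l → l < K →
      (1 - (l : ℝ) / K) * Real.log (l + 1) ≤ ent1 (OmegaKl K l) ∧
        ent1 (OmegaKl K l) ≤ Real.log (l + 1)) ∧
    (∀ l : ℕ, 1 ≤ l →
      Filter.Tendsto (fun K : ℕ => ent1 (OmegaKl K l)) Filter.atTop
        (nhds (Real.log (l + 1)))) := by
  refine ⟨fun K l _ hlK => ⟨le_ent1_OmegaKl (by omega) hlK.le, ent1_OmegaKl_le K l⟩, fun l _ => ?_⟩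
  have hlow : Tendsto (fun K : ℕ => (1 - (l : ℝ) / K) * Real.log (l + 1)) atTop
      (𝓝 (Real.log (l + 1))) := by
    simpa using ((tendsto_const_div_atTop_nhds_zero_nat (l : ℝ)).const_sub 1).mul_const
      (Real.log (l + 1))
  refine tendsto_of_tendsto_of_tendsto_of_le_of_le' hlow tendsto_const_nhds ?_
    (Eventually.of_forall fun K => ent1_OmegaKl_le K l)
  filter_upwards [eventually_gt_atTop l] with K hK
  exact le_ent1_OmegaKl (by omega) hK.le
end

section
/- For K ≥ 2 and 1 ≤ l ≤ K/2, the topological entropy satisfies h(Ω_{K,l−1}) ≤ h(Ω_{K,l}). -/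
/-!
Write `σ n = n + ω n`. For `ω ∈ Ω_K` the state at a cut `m`, i.e. the set of offsets `v ≥ 0` such
that `m + v = σ n` for some site `n < m`, lies in `[0, K)`, evolves by a local rule as `m` increases
and has constant size `a(ω)`.

Given `ω ∈ Ω_{K,l}` with `2 (l + 1) ≤ K`, add a ghost: an offset `g_m` outside the state which
moves down by one at each step, unless the particle of site `m` wants to land on it. In that case
the new configuration sends `m` instead to the free slot of `[1, K]` that has the same rank as
`g_m` in `state m ∪ {g_m}`, and the ghost continues from there. Completed on the negative sites so
that `state 0 ∪ {g_0}` is its state at cut `0`, this gives a configuration of `Ω_{K,l+1}`. Its word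
on `[0, N)`, together with `state 0 ∪ {g_0}` and `g_N`, determines the word of `ω` on `[0, N)`, by
running the ghost backwards. So there are at most `2^K K` times as many `N`-words in `Ω_{K,l}` as
in `Ω_{K,l+1}`, and the entropies compare.
-/

namespace EntropyMonotone

open Finset

section State

variable {K : ℕ} {ω : ℤ → ℤ}

noncomputable def state (K : ℕ) (ω : ℤ → ℤ) (m : ℤ) : Finset ℤ :=
  ((Ico (m - K) m).filter (fun n => m ≤ n + ω n)).image (fun n => n + ω n - m)

def step (S : Finset ℤ) (x : ℤ) : Finset ℤ := ((insert x S).erase 0).image (· - 1)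

lemma mem_state (hb : ∀ n, ω n ∈ Icc (0 : ℤ) K) {m v : ℤ} :
    v ∈ state K ω m ↔ 0 ≤ v ∧ ∃ n < m, n + ω n = m + v := by
  simp only [state, mem_image, mem_filter, mem_Ico]
  constructor
  · rintro ⟨n, ⟨⟨-, hn⟩, hm⟩, rfl⟩
    exact ⟨by omega, n, hn, by ring⟩
  · rintro ⟨hv, n, hn, he⟩
    have := mem_Icc.1 (hb n)
    exact ⟨n, ⟨⟨by omega, hn⟩, by omega⟩, by omega⟩

lemma state_subset_Icc (hb : ∀ n, ω n ∈ Icc (0 : ℤ) K) (m : ℤ) :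
    state K ω m ⊆ Icc 0 ((K : ℤ) - 1) := by
  intro v hv
  obtain ⟨hv, n, hn, he⟩ := (mem_state hb).1 hv
  have := mem_Icc.1 (hb n)
  exact mem_Icc.2 ⟨hv, by omega⟩

lemma mem_step {S : Finset ℤ} {x v : ℤ} : v ∈ step S x ↔ v + 1 ≠ 0 ∧ (v + 1 = x ∨ v + 1 ∈ S) := by
  simp only [step, mem_image, mem_erase, mem_insert]
  constructor
  · rintro ⟨u, hu, rfl⟩
    simpa using hu
  · intro h
    exact ⟨v + 1, h, by ring⟩

lemma step_insert {S : Finset ℤ} {x : ℤ} (hx : x ≠ 0) (y : ℤ) :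
    step (insert x S) y = insert (x - 1) (step S y) := by
  ext v
  have hv : v = x - 1 → v + 1 ≠ 0 := by omega
  simp only [mem_insert, mem_step, show v + 1 = x ↔ v = x - 1 by omega]
  tauto

lemma step_insert_comm (S : Finset ℤ) (x y : ℤ) : step (insert x S) y = step (insert y S) x := by
  rw [step, step, insert_comm]

lemma card_step {S : Finset ℤ} {x : ℤ} (hx : x ∉ S) (h0 : x = 0 ∨ (0 : ℤ) ∈ S) :
    #(step S x) = #S := by
  rw [step, card_image_of_injective _ (sub_left_injective (b := (1 : ℤ)))]
  rcases h0 with rfl | h0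
  · rw [erase_insert hx]
  · have hx0 : x ≠ 0 := fun h => hx (h ▸ h0)
    rw [card_erase_of_mem (mem_insert_of_mem h0), card_insert_of_notMem hx]
    simp

lemma state_succ (hb : ∀ n, ω n ∈ Icc (0 : ℤ) K) (m : ℤ) :
    state K ω (m + 1) = step (state K ω m) (ω m) := by
  ext v
  have hm := mem_Icc.1 (hb m)
  simp only [mem_step, mem_state hb]
  constructor
  · rintro ⟨hv, n, hn, he⟩
    rcases (show n ≤ m by omega).lt_or_eq with hnm | rfl
    · exact ⟨by omega, .inr ⟨by omega, n, hnm, by omega⟩⟩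
    · exact ⟨by omega, .inl (by omega)⟩
  · rintro ⟨hv, hx | ⟨hx, n, hn, he⟩⟩
    · exact ⟨by omega, m, by omega, by omega⟩
    · exact ⟨by omega, n, by omega, by omega⟩

lemma zero_mem_state_iff (hω : ω ∈ OmegaK K) (m : ℤ) : (0 : ℤ) ∈ state K ω m ↔ ω m ≠ 0 := by
  rw [mem_state hω.1]
  constructor
  · rintro ⟨-, n, hn, he⟩ h0
    have := hω.2.injective (a₁ := n) (a₂ := m) (by omega)
    omega
  · intro h0
    obtain ⟨n, hn⟩ := hω.2.surjective m
    have hn : n + ω n = m := hn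
    have := mem_Icc.1 (hω.1 n)
    refine ⟨le_rfl, n, ?_, by omega⟩
    by_contra hnm
    obtain rfl : n = m := by omega
    omega

lemma self_notMem_state (hω : ω ∈ OmegaK K) (m : ℤ) : ω m ∉ state K ω m := by
  rw [mem_state hω.1]
  rintro ⟨-, n, hn, he⟩
  have := hω.2.injective (a₁ := n) (a₂ := m) (by omega)
  omega

lemma card_state_zero (hω : ω ∈ OmegaK K) : #(state K ω 0) = aOm K ω := by
  refine (card_bij (fun k _ => ω (-k) - k) ?_ ?_ ?_).symm
  · intro k hk
    simp only [mem_filter, mem_Icc] at hk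
    exact (mem_state hω.1).2 ⟨by omega, -k, by omega, by ring⟩
  · intro k hk k' hk' he
    simp only [mem_filter, mem_Icc] at hk hk'
    have := hω.2.injective (a₁ := -k) (a₂ := -k') (by omega)
    omega
  · intro v hv
    obtain ⟨hv, n, hn, he⟩ := (mem_state hω.1).1 hv
    have := mem_Icc.1 (hω.1 n)
    exact ⟨-n, by simp only [mem_filter, mem_Icc, neg_neg]; omega, by simp only [neg_neg]; omega⟩

lemma card_state_natCast (hω : ω ∈ OmegaK K) (m : ℕ) : #(state K ω m) = aOm K ω := by
  induction m with
  | zero => exact card_state_zero hω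
  | succ m ih =>
    push_cast
    rw [state_succ hω.1, card_step (self_notMem_state hω m), ih]
    by_cases h : ω m = 0
    · exact .inl h
    · exact .inr ((zero_mem_state_iff hω m).2 h)

lemma card_filter_state_le (hb : ∀ n, ω n ∈ Icc (0 : ℤ) K) (m v : ℤ) :
    #{x ∈ state K ω m | v ≤ x} ≤ ((K : ℤ) - v).toNat := by
  have hsub : {x ∈ state K ω m | v ≤ x} ⊆ (Ico (m + v - K) m).image (fun n => n + ω n - m) := by
    intro x hx
    obtain ⟨hx, hvx⟩ := mem_filter.1 hx
    obtain ⟨-, n, hn, he⟩ := (mem_state hb).1 hx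
    have := mem_Icc.1 (hb n)
    exact mem_image.2 ⟨n, mem_Ico.2 ⟨by omega, hn⟩, by omega⟩
  calc #{x ∈ state K ω m | v ≤ x} ≤ #(Ico (m + v - K) m) := (card_le_card hsub).trans card_image_le
    _ = ((K : ℤ) - v).toNat := by rw [Int.card_Ico]; congr 1; ring

lemma mem_OmegaK_of_local (hb : ∀ n, ω n ∈ Icc (0 : ℤ) K) (m₀ : ℤ)
    (hinj : Set.InjOn (fun n => n + ω n) (Set.Iio m₀))
    (hsurj : ∀ v < m₀, ∃ n < m₀, n + ω n = v)
    (hloc : ∀ m ≥ m₀, ω m ∉ state K ω m ∧ (ω m = 0 ∨ (0 : ℤ) ∈ state K ω m)) :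
    ω ∈ OmegaK K := by
  refine ⟨hb, ?_, fun v => ?_⟩
  · have no_collision : ∀ a b, a < b → a + ω a = b + ω b → False := by
      intro a b hab he
      by_cases hb₀ : b < m₀
      · have := hinj (show a < m₀ by omega) hb₀ he
        omega
      · exact (hloc b (by omega)).1 ((mem_state hb).2 ⟨mem_Icc.1 (hb b) |>.1, a, hab, he⟩)
    intro a b he
    rcases lt_trichotomy a b with h | h | h
    · exact (no_collision a b h he).elim
    · exact h
    · exact (no_collision b a h he.symm).elim
  · by_cases hv : v < m₀
    · obtain ⟨n, -, he⟩ := hsurj v hv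
      exact ⟨n, he⟩
    · rcases (hloc v (by omega)).2 with h | h
      · exact ⟨v, by simp [h]⟩
      · obtain ⟨-, n, -, he⟩ := (mem_state hb).1 h
        exact ⟨n, by simpa using he⟩

end State

section Rank

variable {α : Type*} [LinearOrder α] {A : Finset α}

def rank (A : Finset α) (x : α) : ℕ := (A.sort).idxOf x

lemma rank_lt {x : α} (hx : x ∈ A) : rank A x < #A := by
  rw [rank, ← length_sort (· ≤ ·)]
  exact List.idxOf_lt_length_iff.2 ((mem_sort _).2 hx)

variable [Inhabited α]

def nth (A : Finset α) (i : ℕ) : α := (A.sort).getD i default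

lemma nth_eq_getElem {i : ℕ} (h : i < #A) :
    nth A i = (A.sort)[i]'(by rwa [length_sort]) :=
  List.getD_eq_getElem _ _ _

lemma nth_mem {i : ℕ} (h : i < #A) : nth A i ∈ A := by
  rw [nth_eq_getElem h]
  exact (mem_sort _).1 (List.getElem_mem _)

lemma nth_rank {x : α} (hx : x ∈ A) : nth A (rank A x) = x := by
  rw [nth_eq_getElem (rank_lt hx)]
  exact List.getElem_idxOf _

lemma rank_nth {i : ℕ} (h : i < #A) : rank A (nth A i) = i := by
  rw [nth_eq_getElem h, rank]
  exact (sort_nodup _ _).idxOf_getElem _ _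

lemma nth_injective {i j : ℕ} (hi : i < #A) (hj : j < #A) (h : nth A i = nth A j) : i = j := by
  rw [← rank_nth hi, ← rank_nth hj, h]

lemma nth_mono {i j : ℕ} (hij : i ≤ j) (hj : j < #A) : nth A i ≤ nth A j := by
  rw [nth_eq_getElem (hij.trans_lt hj), nth_eq_getElem hj]
  exact A.sortedLT_sort.strictMono_get.monotone (a := ⟨i, _⟩) (b := ⟨j, _⟩) hij

lemma card_sub_le_card_filter_nth_le (i : ℕ) : #A - i ≤ #{x ∈ A | nth A i ≤ x} := by
  have := card_le_card_of_injOn (s := Ico i #A) (nth A)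
    (fun j hj => by
      rw [coe_Ico, Set.mem_Ico] at hj
      exact mem_filter.2 ⟨nth_mem hj.2, nth_mono hj.1 hj.2⟩)
    (fun a ha b hb hab => nth_injective (mem_Ico.1 ha).2 (mem_Ico.1 hb).2 hab)
  rwa [Nat.card_Ico] at this

end Rank

section FillNeg

/-- Sends the sites `-#S, …, -1` in increasing order onto `S` and every earlier site `n` to
`n + #S`. -/
def fillNeg (S : Finset ℤ) (n : ℤ) : ℤ :=
  if -(#S : ℤ) ≤ n then nth S (#S + n).toNat - n else #S

variable {K : ℕ} {S : Finset ℤ} {ω : ℤ → ℤ}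

lemma add_fillNeg_of_le {n : ℤ} (hn : -(#S : ℤ) ≤ n) : n + fillNeg S n = nth S (#S + n).toNat := by
  rw [fillNeg, if_pos hn]; ring

lemma add_fillNeg_of_lt {n : ℤ} (hn : n < -(#S : ℤ)) : n + fillNeg S n = n + #S := by
  rw [fillNeg, if_neg (not_le.2 hn)]

lemma zero_le_nth (hS : ∀ x ∈ S, 0 ≤ x) {i : ℕ} (hi : i < #S) : 0 ≤ nth S i :=
  hS _ (nth_mem hi)

lemma injOn_of_eq_fillNeg (hS : ∀ x ∈ S, 0 ≤ x) (h : ∀ n < 0, ω n = fillNeg S n) :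
    Set.InjOn (fun n => n + ω n) (Set.Iio 0) := by
  intro a (ha : a < 0) b (hb : b < 0) (he : a + ω a = b + ω b)
  rw [h a ha, h b hb] at he
  rcases le_or_gt (-(#S : ℤ)) a with ha' | ha' <;> rcases le_or_gt (-(#S : ℤ)) b with hb' | hb'
  · rw [add_fillNeg_of_le ha', add_fillNeg_of_le hb'] at he
    have := nth_injective (by omega) (by omega) he
    omega
  · rw [add_fillNeg_of_le ha', add_fillNeg_of_lt hb'] at he
    have := zero_le_nth hS (i := (#S + a).toNat) (by omega)
    omega
  · rw [add_fillNeg_of_lt ha', add_fillNeg_of_le hb'] at he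
    have := zero_le_nth hS (i := (#S + b).toNat) (by omega)
    omega
  · rw [add_fillNeg_of_lt ha', add_fillNeg_of_lt hb'] at he
    omega

lemma exists_add_eq_of_eq_fillNeg (h : ∀ n < 0, ω n = fillNeg S n) {v : ℤ} (hv : v < 0) :
    ∃ n < 0, n + ω n = v :=
  ⟨v - #S, by omega, by rw [h _ (by omega), add_fillNeg_of_lt (by omega)]; ring⟩

lemma state_zero_of_eq_fillNeg (hb : ∀ n, ω n ∈ Icc (0 : ℤ) K) (hS : ∀ x ∈ S, 0 ≤ x)
    (h : ∀ n < 0, ω n = fillNeg S n) : state K ω 0 = S := by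
  ext v
  rw [mem_state hb, zero_add]
  constructor
  · rintro ⟨hv, n, hn, he⟩
    rw [h n hn] at he
    rcases le_or_gt (-(#S : ℤ)) n with hn' | hn'
    · rw [add_fillNeg_of_le hn'] at he
      exact he ▸ nth_mem (by omega)
    · rw [add_fillNeg_of_lt hn'] at he
      omega
  · intro hv
    have hr := rank_lt hv
    refine ⟨hS v hv, rank S v - #S, by omega, ?_⟩
    rw [h _ (by omega), add_fillNeg_of_le (by omega)]
    simp [nth_rank hv]

lemma fillNeg_mem_Icc (hS : ∀ x ∈ S, 0 ≤ x) (hK : ∀ v, #{x ∈ S | v ≤ x} ≤ ((K : ℤ) - v).toNat)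
    {n : ℤ} (hn : n < 0) : fillNeg S n ∈ Icc (0 : ℤ) K := by
  have hSK : #S ≤ K := by
    simpa [filter_true_of_mem hS] using hK 0
  rw [mem_Icc]
  rcases le_or_gt (-(#S : ℤ)) n with hn' | hn'
  · have hpos := zero_le_nth hS (i := (#S + n).toNat) (by omega)
    have hcount := (card_sub_le_card_filter_nth_le (A := S) (#S + n).toNat).trans (hK _)
    rw [fillNeg, if_pos hn']
    omega
  · rw [fillNeg, if_neg (not_le.2 hn')]
    omega

end FillNeg

section Ghost

noncomputable def freeSlot (K : ℕ) (T : Finset ℤ) (g : ℤ) : ℤ := nth (Icc 1 (K : ℤ) \ T) (rank T g)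

section FreeSlot

variable {K : ℕ} {T : Finset ℤ} {g : ℤ}

lemma freeSlot_mem (hg : g ∈ T) (hT : #T ≤ #(Icc 1 (K : ℤ) \ T)) :
    freeSlot K T g ∈ Icc 1 (K : ℤ) \ T :=
  nth_mem ((rank_lt hg).trans_le hT)

lemma nth_rank_freeSlot (hg : g ∈ T) (hT : #T ≤ #(Icc 1 (K : ℤ) \ T)) :
    nth T (rank (Icc 1 (K : ℤ) \ T) (freeSlot K T g)) = g := by
  rw [freeSlot, rank_nth ((rank_lt hg).trans_le hT), nth_rank hg]

end FreeSlot

/-- The ghost starts at the least free offset of `[0, a(ω)]`: keeping it at most `a(ω)` is what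
makes the completion by `fillNeg` respect the bound `K` (`card_filter_ghostState_zero_le`). -/
noncomputable def ghost (K : ℕ) (ω : ℤ → ℤ) : ℕ → ℤ
  | 0 => nth (Icc 0 (#(state K ω 0) : ℤ) \ state K ω 0) 0
  | m + 1 =>
    if ω m = ghost K ω m then freeSlot K (insert (ghost K ω m) (state K ω m)) (ghost K ω m) - 1
    else ghost K ω m - 1

noncomputable def ghostState (K : ℕ) (ω : ℤ → ℤ) (m : ℕ) : Finset ℤ :=
  insert (ghost K ω m) (state K ω m)

noncomputable def ghostWord (K : ℕ) (ω : ℤ → ℤ) (m : ℕ) : ℤ :=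
  if ω m = ghost K ω m then freeSlot K (ghostState K ω m) (ghost K ω m) else ω m

variable {K l : ℕ} {ω : ℤ → ℤ}

lemma ghost_succ (m : ℕ) :
    ghost K ω (m + 1) = if ω m = ghost K ω m then ghostWord K ω m - 1 else ghost K ω m - 1 := by
  by_cases h : ω m = ghost K ω m <;> simp [ghost, ghostWord, ghostState, h]

lemma ghost_succ_eq_iff (m : ℕ) : ghost K ω (m + 1) = ghostWord K ω m - 1 ↔ ω m = ghost K ω m := by
  rw [ghost_succ]
  by_cases h : ω m = ghost K ω m
  · simp [h]
  · rw [if_neg h, ghostWord, if_neg h]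
    exact ⟨fun e => (h (by omega)).elim, fun e => (h e).elim⟩

lemma ghost_zero_mem (hω : ω ∈ OmegaKl K l) : ghost K ω 0 ∈ Icc 0 (l : ℤ) \ state K ω 0 := by
  have hcard : #(state K ω 0) = l := by rw [card_state_zero hω.1, hω.2]
  rw [ghost, hcard]
  apply nth_mem
  have := le_card_sdiff (state K ω 0) (Icc 0 (l : ℤ))
  simp only [Int.card_Icc, hcard] at this
  omega

lemma card_ghostState (hω : ω ∈ OmegaKl K l) {m : ℕ} (hg : ghost K ω m ∉ state K ω m) :
    #(ghostState K ω m) = l + 1 := by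
  rw [ghostState, card_insert_of_notMem hg, card_state_natCast hω.1, hω.2]

lemma card_ghostState_le (hω : ω ∈ OmegaKl K l) (hlK : 2 * l + 2 ≤ K) {m : ℕ}
    (hg : ghost K ω m ∉ state K ω m) :
    #(ghostState K ω m) ≤ #(Icc 1 (K : ℤ) \ ghostState K ω m) := by
  have := le_card_sdiff (ghostState K ω m) (Icc 1 (K : ℤ))
  rw [card_ghostState hω hg, Int.card_Icc] at *
  omega

lemma freeSlot_ghost_mem (hω : ω ∈ OmegaKl K l) (hlK : 2 * l + 2 ≤ K) {m : ℕ}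
    (hg : ghost K ω m ∉ state K ω m) :
    freeSlot K (ghostState K ω m) (ghost K ω m) ∈ Icc 1 (K : ℤ) \ ghostState K ω m :=
  freeSlot_mem (mem_insert_self _ _) (card_ghostState_le hω hlK hg)

lemma one_le_ghost_of_ne (hω : ω ∈ OmegaK K) {m : ℕ} (hg : ghost K ω m ∉ state K ω m)
    (hg₀ : 0 ≤ ghost K ω m) (hne : ω m ≠ ghost K ω m) : 1 ≤ ghost K ω m := by
  by_contra! h
  obtain h0 : ghost K ω m = 0 := by omega
  exact hg (h0 ▸ (zero_mem_state_iff hω m).2 (h0 ▸ hne))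

lemma ghost_spec (hω : ω ∈ OmegaKl K l) (hlK : 2 * l + 2 ≤ K) (m : ℕ) :
    ghost K ω m ∉ state K ω m ∧ ghost K ω m ∈ Icc 0 ((K : ℤ) - 1) := by
  induction m with
  | zero =>
    obtain ⟨h, hg⟩ := mem_sdiff.1 (ghost_zero_mem hω)
    exact ⟨hg, mem_Icc.2 ⟨(mem_Icc.1 h).1, by have := (mem_Icc.1 h).2; omega⟩⟩
  | succ m ih =>
    obtain ⟨hg, hgK⟩ := ih
    rw [mem_Icc] at hgK
    have hst : state K ω ((m + 1 : ℕ) : ℤ) = step (state K ω m) (ω m) := by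
      push_cast; exact state_succ hω.1.1 m
    rw [hst, mem_step, ghost_succ]
    by_cases hc : ω m = ghost K ω m
    · obtain ⟨hslot, hslotT⟩ := mem_sdiff.1 (freeSlot_ghost_mem hω hlK hg)
      rw [mem_Icc] at hslot
      rw [if_pos hc, ghostWord, if_pos hc, sub_add_cancel]
      refine ⟨fun ⟨_, h⟩ => hslotT ?_, mem_Icc.2 ⟨by omega, by omega⟩⟩
      rcases h with h | h
      · exact h ▸ hc ▸ mem_insert_self _ _
      · exact mem_insert_of_mem h
    · have := one_le_ghost_of_ne hω.1 hg hgK.1 hc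
      rw [if_neg hc, sub_add_cancel]
      exact ⟨fun ⟨_, h⟩ => h.elim (fun h => hc h.symm) hg, mem_Icc.2 ⟨by omega, by omega⟩⟩

end Ghost

section GhostConfig

variable {K l : ℕ} {ω : ℤ → ℤ}

lemma ghostWord_notMem (hω : ω ∈ OmegaKl K l) (hlK : 2 * l + 2 ≤ K) (m : ℕ) :
    ghostWord K ω m ∉ ghostState K ω m := by
  rw [ghostWord]
  split_ifs with hc
  · exact (mem_sdiff.1 (freeSlot_ghost_mem hω hlK (ghost_spec hω hlK m).1)).2
  · rw [ghostState, mem_insert, not_or]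
    exact ⟨hc, self_notMem_state hω.1 m⟩

lemma ghostWord_mem_Icc (hω : ω ∈ OmegaKl K l) (hlK : 2 * l + 2 ≤ K) (m : ℕ) :
    ghostWord K ω m ∈ Icc 0 (K : ℤ) := by
  rw [ghostWord]
  split_ifs with hc
  · have := mem_Icc.1 (mem_sdiff.1 (freeSlot_ghost_mem hω hlK (ghost_spec hω hlK m).1)).1
    exact mem_Icc.2 ⟨by omega, this.2⟩
  · exact hω.1.1 m

lemma ghostWord_eq_zero_or (hω : ω ∈ OmegaKl K l) (m : ℕ) :
    ghostWord K ω m = 0 ∨ (0 : ℤ) ∈ ghostState K ω m := by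
  by_cases h0 : ω m = 0
  · by_cases hc : ω m = ghost K ω m
    · exact .inr (h0 ▸ hc ▸ mem_insert_self _ _)
    · exact .inl (by rw [ghostWord, if_neg hc, h0])
  · exact .inr (mem_insert_of_mem ((zero_mem_state_iff hω.1 m).2 h0))

lemma ghostState_succ (hω : ω ∈ OmegaKl K l) (hlK : 2 * l + 2 ≤ K) (m : ℕ) :
    ghostState K ω (m + 1) = step (ghostState K ω m) (ghostWord K ω m) := by
  obtain ⟨hg, hgK⟩ := ghost_spec hω hlK m
  have hst : state K ω ((m + 1 : ℕ) : ℤ) = step (state K ω m) (ω m) := by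
    push_cast; exact state_succ hω.1.1 m
  rw [ghostState, ghostState, hst, ghost_succ]
  by_cases hc : ω m = ghost K ω m
  · have hw := mem_Icc.1 (ghostWord_mem_Icc hω hlK m)
    have hw₀ : ghostWord K ω m ≠ 0 := by
      rw [ghostWord, if_pos hc]
      have := mem_Icc.1 (mem_sdiff.1 (freeSlot_ghost_mem hω hlK hg)).1
      omega
    rw [if_pos hc, step_insert_comm, step_insert hw₀, hc]
  · rw [if_neg hc, step_insert (by have := one_le_ghost_of_ne hω.1 hg (mem_Icc.1 hgK).1 hc; omega),
      ghostWord, if_neg hc]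

lemma ghostState_subset_Icc (hω : ω ∈ OmegaKl K l) (hlK : 2 * l + 2 ≤ K) (m : ℕ) :
    ghostState K ω m ⊆ Icc 0 ((K : ℤ) - 1) :=
  insert_subset (ghost_spec hω hlK m).2 (state_subset_Icc hω.1.1 m)

lemma nonneg_of_mem_ghostState (hω : ω ∈ OmegaKl K l) (hlK : 2 * l + 2 ≤ K) {m : ℕ} {x : ℤ}
    (hx : x ∈ ghostState K ω m) : 0 ≤ x :=
  (mem_Icc.1 (ghostState_subset_Icc hω hlK m hx)).1

lemma card_filter_ghostState_zero_le (hω : ω ∈ OmegaKl K l) (hlK : 2 * l + 2 ≤ K) (v : ℤ) :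
    #{x ∈ ghostState K ω 0 | v ≤ x} ≤ ((K : ℤ) - v).toNat := by
  have hg₀ := mem_Icc.1 (mem_sdiff.1 (ghost_zero_mem hω)).1
  by_cases hv : v ≤ ghost K ω 0
  · have := card_filter_le (ghostState K ω 0) (v ≤ ·)
    rw [card_ghostState hω (ghost_spec hω hlK 0).1] at this
    omega
  · rw [ghostState, filter_insert, if_neg hv]
    exact card_filter_state_le hω.1.1 0 v

noncomputable def ghostConfig (K : ℕ) (ω : ℤ → ℤ) (n : ℤ) : ℤ :=
  if 0 ≤ n then ghostWord K ω n.toNat else fillNeg (ghostState K ω 0) n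

lemma ghostConfig_natCast (m : ℕ) : ghostConfig K ω m = ghostWord K ω m := by
  simp [ghostConfig]

lemma ghostConfig_of_neg {n : ℤ} (hn : n < 0) :
    ghostConfig K ω n = fillNeg (ghostState K ω 0) n := by
  rw [ghostConfig, if_neg (not_le.2 hn)]

lemma ghostConfig_mem_Icc (hω : ω ∈ OmegaKl K l) (hlK : 2 * l + 2 ≤ K) (n : ℤ) :
    ghostConfig K ω n ∈ Icc 0 (K : ℤ) := by
  rcases le_or_gt 0 n with hn | hn
  · lift n to ℕ using hn
    rw [ghostConfig_natCast]
    exact ghostWord_mem_Icc hω hlK n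
  · rw [ghostConfig_of_neg hn]
    exact fillNeg_mem_Icc (fun _ => nonneg_of_mem_ghostState hω hlK)
      (card_filter_ghostState_zero_le hω hlK) hn

lemma state_ghostConfig (hω : ω ∈ OmegaKl K l) (hlK : 2 * l + 2 ≤ K) (m : ℕ) :
    state K (ghostConfig K ω) m = ghostState K ω m := by
  have hb := ghostConfig_mem_Icc hω hlK
  induction m with
  | zero =>
    exact state_zero_of_eq_fillNeg hb (fun _ => nonneg_of_mem_ghostState hω hlK)
      (fun _ => ghostConfig_of_neg)
  | succ m ih =>
    push_cast
    rw [state_succ hb, ih, ghostConfig_natCast, ghostState_succ hω hlK]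

theorem ghostConfig_mem_OmegaKl (hω : ω ∈ OmegaKl K l) (hlK : 2 * l + 2 ≤ K) :
    ghostConfig K ω ∈ OmegaKl K (l + 1) := by
  have hb := ghostConfig_mem_Icc hω hlK
  have hS : ∀ x ∈ ghostState K ω 0, 0 ≤ x := fun _ => nonneg_of_mem_ghostState hω hlK
  have hneg : ∀ n < 0, ghostConfig K ω n = fillNeg (ghostState K ω 0) n :=
    fun _ => ghostConfig_of_neg
  have hmem : ghostConfig K ω ∈ OmegaK K := by
    refine mem_OmegaK_of_local hb 0 (injOn_of_eq_fillNeg hS hneg)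
      (fun v hv => exists_add_eq_of_eq_fillNeg hneg hv) fun m hm => ?_
    lift m to ℕ using hm
    rw [state_ghostConfig hω hlK, ghostConfig_natCast]
    exact ⟨ghostWord_notMem hω hlK m, ghostWord_eq_zero_or hω m⟩
  refine ⟨hmem, ?_⟩
  rw [← card_state_zero hmem, ← Nat.cast_zero, state_ghostConfig hω hlK,
    card_ghostState hω (ghost_spec hω hlK 0).1]

end GhostConfig

section Recovery

variable {K l : ℕ} {ω ω₁ ω₂ : ℤ → ℤ}

lemma ghost_eq_nth_rank (hω : ω ∈ OmegaKl K l) (hlK : 2 * l + 2 ≤ K) {m : ℕ}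
    (hc : ω m = ghost K ω m) :
    ghost K ω m =
      nth (ghostState K ω m) (rank (Icc 1 (K : ℤ) \ ghostState K ω m) (ghostWord K ω m)) := by
  rw [ghostWord, if_pos hc]
  exact (nth_rank_freeSlot (mem_insert_self _ _)
    (card_ghostState_le hω hlK (ghost_spec hω hlK m).1)).symm

lemma ghost_eq_and_eq_of_succ (hω₁ : ω₁ ∈ OmegaKl K l) (hω₂ : ω₂ ∈ OmegaKl K l)
    (hlK : 2 * l + 2 ≤ K) {m : ℕ} (hT : ghostState K ω₁ m = ghostState K ω₂ m)
    (hw : ghostWord K ω₁ m = ghostWord K ω₂ m) (hg : ghost K ω₁ (m + 1) = ghost K ω₂ (m + 1)) :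
    ghost K ω₁ m = ghost K ω₂ m ∧ ω₁ m = ω₂ m := by
  have hc : ω₁ m = ghost K ω₁ m ↔ ω₂ m = ghost K ω₂ m := by
    rw [← ghost_succ_eq_iff, ← ghost_succ_eq_iff, hg, hw]
  by_cases hc₁ : ω₁ m = ghost K ω₁ m
  · have hc₂ := hc.1 hc₁
    have hgm : ghost K ω₁ m = ghost K ω₂ m := by
      rw [ghost_eq_nth_rank hω₁ hlK hc₁, ghost_eq_nth_rank hω₂ hlK hc₂, hT, hw]
    exact ⟨hgm, by rw [hc₁, hc₂, hgm]⟩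
  · have hc₂ := mt hc.2 hc₁
    rw [ghost_succ, ghost_succ, if_neg hc₁, if_neg hc₂] at hg
    rw [ghostWord, ghostWord, if_neg hc₁, if_neg hc₂] at hw
    exact ⟨by omega, hw⟩

theorem eq_of_ghostWord_eq (hω₁ : ω₁ ∈ OmegaKl K l) (hω₂ : ω₂ ∈ OmegaKl K l)
    (hlK : 2 * l + 2 ≤ K) {N : ℕ} (h₀ : ghostState K ω₁ 0 = ghostState K ω₂ 0)
    (hN : ghost K ω₁ N = ghost K ω₂ N) (hw : ∀ m < N, ghostWord K ω₁ m = ghostWord K ω₂ m)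
    {m : ℕ} (hm : m < N) : ω₁ m = ω₂ m := by
  have hT : ∀ m ≤ N, ghostState K ω₁ m = ghostState K ω₂ m := by
    intro m hm
    induction m with
    | zero => exact h₀
    | succ m ih =>
      rw [ghostState_succ hω₁ hlK, ghostState_succ hω₂ hlK, ih (by omega), hw m (by omega)]
  have hg : ∀ k ≤ N, ghost K ω₁ (N - k) = ghost K ω₂ (N - k) := by
    intro k hk
    induction k with
    | zero => exact hN
    | succ k ih =>
      refine (ghost_eq_and_eq_of_succ hω₁ hω₂ hlK (hT _ (by omega)) (hw _ (by omega)) ?_).1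
      rw [show N - (k + 1) + 1 = N - k by omega]
      exact ih (by omega)
  refine (ghost_eq_and_eq_of_succ hω₁ hω₂ hlK (hT m hm.le) (hw m hm) ?_).2
  simpa [show N - (N - (m + 1)) = m + 1 by omega] using hg (N - (m + 1)) (by omega)

end Recovery

abbrev Words (Ω : Set (ℤ → ℤ)) (N : ℕ) : Type :=
  {w : Fin N → ℤ // ∃ ω ∈ Ω, ∀ i : Fin N, w i = ω ((i : ℕ) : ℤ)}

section Counting

variable {K : ℕ} {Ω : Set (ℤ → ℤ)}

lemma exists_injective_words (hΩ : ∀ ω ∈ Ω, ∀ n, ω n ∈ Icc (0 : ℤ) K) (N : ℕ) :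
    ∃ f : Words Ω N → (Fin N → Icc (0 : ℤ) K), Function.Injective f := by
  refine ⟨fun w i => ⟨w.1 i, ?_⟩, fun w₁ w₂ h => Subtype.ext (funext fun i => ?_)⟩
  · obtain ⟨ω, hω, hw⟩ := w.2
    exact hw i ▸ hΩ ω hω _
  · exact congrArg Subtype.val (congrFun h i)

lemma finite_words (hΩ : ∀ ω ∈ Ω, ∀ n, ω n ∈ Icc (0 : ℤ) K) (N : ℕ) : Finite (Words Ω N) :=
  have ⟨f, hf⟩ := exists_injective_words hΩ N
  Finite.of_injective f hf

lemma card_words_le (hΩ : ∀ ω ∈ Ω, ∀ n, ω n ∈ Icc (0 : ℤ) K) (N : ℕ) :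
    Nat.card (Words Ω N) ≤ (K + 1) ^ N := by
  obtain ⟨f, hf⟩ := exists_injective_words hΩ N
  refine (Nat.card_le_card_of_injective f hf).trans_eq ?_
  rw [Nat.card_pi, prod_const, Nat.card_eq_finsetCard, Int.card_Icc, card_univ, Fintype.card_fin]
  congr 1

lemma card_words_le_mul {l : ℕ} (hlK : 2 * l + 2 ≤ K) (N : ℕ) :
    Nat.card (Words (OmegaKl K l) N) ≤ Nat.card (Words (OmegaKl K (l + 1)) N) * (2 ^ K * K) := by
  choose ω hω hwω using fun w : Words (OmegaKl K l) N => w.2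
  let E : Finset (Finset ℤ × ℤ) := (Icc 0 ((K : ℤ) - 1)).powerset ×ˢ Icc 0 ((K : ℤ) - 1)
  let f : Words (OmegaKl K l) N → Words (OmegaKl K (l + 1)) N × E := fun w =>
    (⟨fun i => ghostWord K (ω w) i, ghostConfig K (ω w), ghostConfig_mem_OmegaKl (hω w) hlK,
        fun i => (ghostConfig_natCast i).symm⟩,
      ⟨(ghostState K (ω w) 0, ghost K (ω w) N), mem_product.2
        ⟨mem_powerset.2 (ghostState_subset_Icc (hω w) hlK 0), (ghost_spec (hω w) hlK N).2⟩⟩)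
  have hf : Function.Injective f := by
    intro w₁ w₂ h
    simp only [f, Prod.mk.injEq, Subtype.mk.injEq] at h
    obtain ⟨hw, h₀, hN⟩ := h
    refine Subtype.ext (funext fun i => ?_)
    rw [hwω w₁ i, hwω w₂ i]
    exact eq_of_ghostWord_eq (hω w₁) (hω w₂) hlK h₀ hN (fun m hm => congrFun hw ⟨m, hm⟩) i.2
  have := finite_words (Ω := OmegaKl K (l + 1)) (fun ω hω => hω.1.1) N
  refine (Nat.card_le_card_of_injective f hf).trans_eq ?_
  rw [Nat.card_prod, Nat.card_eq_finsetCard, card_product, card_powerset, Int.card_Icc]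
  congr 3 <;> omega

end Counting

open Real in
lemma log_le_log_add_log_of_le_mul {a b C : ℕ} (h : a ≤ b * C) :
    log a ≤ log b + log C := by
  rcases Nat.eq_zero_or_pos a with rfl | ha
  · simpa using add_nonneg (log_natCast_nonneg b) (log_natCast_nonneg C)
  have hbC : 0 < b * C := ha.trans_le h
  rw [← log_mul (by exact_mod_cast (Nat.pos_of_mul_pos_right hbC).ne')
    (by exact_mod_cast (Nat.pos_of_mul_pos_left hbC).ne')]
  exact log_le_log (by exact_mod_cast ha) (by exact_mod_cast h)

open Real in
lemma log_div_le_log_of_le_pow {b B N : ℕ} (h : b ≤ B ^ N) : log b / N ≤ log B := by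
  rcases Nat.eq_zero_or_pos b with rfl | hb
  · simp [log_natCast_nonneg]
  rcases Nat.eq_zero_or_pos N with rfl | hN
  · simp [log_natCast_nonneg]
  rw [div_le_iff₀ (by exact_mod_cast hN), mul_comm, ← log_pow]
  exact log_le_log (by exact_mod_cast hb) (by exact_mod_cast h)

open Filter Real in
lemma limsup_log_div_le {a b : ℕ → ℕ} {B C : ℕ} (hb : ∀ N, b N ≤ B ^ N)
    (hab : ∀ N, a N ≤ b N * C) :
    limsup (fun N : ℕ => log (a N) / N) atTop ≤ limsup (fun N : ℕ => log (b N) / N) atTop := by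
  set v := fun N : ℕ => log (b N) / N
  set w := fun N : ℕ => log C / N
  have hw : Tendsto w atTop (nhds 0) := tendsto_const_div_atTop_nhds_zero_nat _
  have hv_le : IsBoundedUnder (· ≤ ·) atTop v :=
    isBoundedUnder_of ⟨log B, fun N => log_div_le_log_of_le_pow (hb N)⟩
  have hv_ge : IsBoundedUnder (· ≥ ·) atTop v :=
    isBoundedUnder_of ⟨0, fun N => div_nonneg (log_natCast_nonneg _) N.cast_nonneg⟩
  calc limsup (fun N : ℕ => log (a N) / N) atTop
      ≤ limsup (v + w) atTop := by
        refine limsup_le_limsup (Eventually.of_forall fun N => ?_)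
          (isCoboundedUnder_le_of_le atTop fun N =>
            div_nonneg (log_natCast_nonneg (a N)) N.cast_nonneg)
          (isBoundedUnder_le_add hv_le hw.isBoundedUnder_le)
        rw [Pi.add_apply, ← add_div]
        exact div_le_div_of_nonneg_right (log_le_log_add_log_of_le_mul (hab N)) N.cast_nonneg
    _ ≤ limsup v atTop + limsup w atTop :=
        limsup_add_le hv_ge hv_le
          (isCoboundedUnder_le_of_le atTop fun N => div_nonneg (log_natCast_nonneg C) N.cast_nonneg)
          hw.isBoundedUnder_le
    _ = limsup v atTop := by rw [hw.limsup_eq, add_zero]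

end EntropyMonotone

theorem entropy_monotone_general (K l : ℕ) (hl : 1 ≤ l) (hlK : 2 * l ≤ K) :
    ent1 (OmegaKl K (l - 1)) ≤ ent1 (OmegaKl K l) := by
  obtain ⟨k, rfl⟩ := Nat.exists_eq_add_of_le' hl
  rw [Nat.add_sub_cancel]
  exact EntropyMonotone.limsup_log_div_le (EntropyMonotone.card_words_le (fun ω hω => hω.1.1))
    (EntropyMonotone.card_words_le_mul (by omega))

/-- For `K ≥ 2` and `1 ≤ l ≤ K/2`, `h(Ω_{K,l-1}) ≤ h(Ω_{K,l})`. -/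
theorem entropy_monotone (K l : ℕ) (hK : 2 ≤ K) (hl : 1 ≤ l) (hlK : 2 * l ≤ K) :
    ent1 (OmegaKl K (l - 1)) ≤ ent1 (OmegaKl K l) :=
  entropy_monotone_general K l hl hlK
end

section
/- Let d ≥ 2 and A ⊂ Z^d finite. The Z^d-shift of finite type Ω_A (the set of ω ∈ A^{Z^d} with n ↦ n + ω_n a bijection of Z^d) has positive topological entropy if and only if |A| ≥ 3. -/
/-- The `ℤ^d`-SFT of permutation configurations with movement in `A`. -/
def OmegaA (d : ℕ) (A : Finset (Fin d → ℤ)) : Set ((Fin d → ℤ) → (Fin d → ℤ)) :=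
  {ω | (∀ n, ω n ∈ A) ∧ Function.Bijective (fun n => n + ω n)}

/-- Topological entropy of a `ℤ^d`-subshift: exponential growth rate (in the
volume `N^d`) of the number of patterns on the box `{0,…,N-1}^d`. -/
noncomputable def entd (d : ℕ) (Ω : Set ((Fin d → ℤ) → (Fin d → ℤ))) : ℝ :=
  Filter.limsup (fun N : ℕ =>
    Real.log (Nat.card {w : (Fin d → Fin N) → (Fin d → ℤ) //
      ∃ ω ∈ Ω, ∀ i, w i = ω (fun j => ((i j : ℕ) : ℤ))}) / (N : ℝ) ^ d)
    Filter.atTop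

/-!
If `A = {α, β}`, every `ω ∈ Ω_A` is `(β - α)`-periodic: the point `n + β` has a unique preimage
under `m ↦ m + ω m`, which is `n` or `n + (β - α)`. Modulo the period, the `N`-box has only
`O(N ^ (d - 1))` cells, so the entropy vanishes (and trivially so when `|A| ≤ 1`).

If `|A| ≥ 3`, let `x` be the lexicographically least point of `A` and `x + u`, `x + w` two others.
Along a "track" `ρ + k • (u + w)` (`k ∈ ℤ`), a permutation with steps in `{0, u, w}` may go from
`ρ + k • (u + w)` to `ρ + (k + 1) • (u + w)` either through `+ u` or through `+ w`, fixing the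
middle point it skips: one free bit per step. As `u` and `w` are distinct and lexicographically
positive, `P • u + Q • w = 0` with `|P - Q| ≤ 2` forces `P = Q = 0`; this keeps the diamonds along
a track, and tracks based at a widely spaced copy of a hyperplane, disjoint. This gives
`2 ^ (M ^ d)` patterns on a box of side `K * M`.
-/

open Function Filter

namespace PermutationSubshift

variable {d : ℕ}

lemma exists_abs_le (f : Fin d → ℤ) : ∃ V : ℕ, ∀ j, |f j| ≤ V :=
  ⟨∑ j, (f j).natAbs, fun j => by
    rw [Int.abs_eq_natAbs]
    exact_mod_cast Finset.single_le_sum (fun j _ => Nat.zero_le (f j).natAbs) (Finset.mem_univ j)⟩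

def windowPoint {N : ℕ} (i : Fin d → Fin N) : Fin d → ℤ := fun j => (i j : ℤ)

abbrev Patterns (d N : ℕ) (Ω : Set ((Fin d → ℤ) → (Fin d → ℤ))) :=
  {w : (Fin d → Fin N) → (Fin d → ℤ) // ∃ ω ∈ Ω, ∀ i, w i = ω (windowPoint i)}

lemma entd_eq_limsup (Ω : Set ((Fin d → ℤ) → (Fin d → ℤ))) :
    entd d Ω = limsup (fun N : ℕ => Real.log (Nat.card (Patterns d N Ω)) / (N : ℝ) ^ d) atTop :=
  rfl

lemma windowPoint_mem_Ico {N : ℕ} (i : Fin d → Fin N) (j : Fin d) :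
    0 ≤ windowPoint i j ∧ windowPoint i j < N := by
  simp [windowPoint]

lemma windowPoint_injective {N : ℕ} : Injective (windowPoint (d := d) (N := N)) :=
  fun i i' h => funext fun j => Fin.ext (by simpa [windowPoint] using congrFun h j)

lemma exists_windowPoint_eq {N : ℕ} {y : Fin d → ℤ} (hy : ∀ j, 0 ≤ y j ∧ y j < N) :
    ∃ i : Fin d → Fin N, windowPoint i = y :=
  ⟨fun j => ⟨(y j).toNat, by have := hy j; omega⟩, funext fun j => by
    simp [windowPoint, Int.toNat_of_nonneg (hy j).1]⟩

section Counting

variable {N : ℕ} {Ω : Set ((Fin d → ℤ) → (Fin d → ℤ))} {A : Finset (Fin d → ℤ)}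

lemma finite_patterns (hΩA : ∀ ω ∈ Ω, ∀ n, ω n ∈ A) : Finite (Patterns d N Ω) := by
  refine Finite.of_injective (fun w i => (⟨w.1 i, ?_⟩ : A)) fun w w' h => ?_
  · obtain ⟨ω, hω, hw⟩ := w.2
    exact hw i ▸ hΩA ω hω _
  · exact Subtype.ext (funext fun i => congrArg Subtype.val (congrFun h i))

lemma card_patterns_le_pow (hΩA : ∀ ω ∈ Ω, ∀ n, ω n ∈ A) (T : Finset (Fin d → ℤ))
    (r : (Fin d → Fin N) → Fin d → ℤ) (hrT : ∀ i, r i ∈ T)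
    (hr : ∀ ω ∈ Ω, ∀ i, ω (windowPoint i) = ω (r i)) :
    Nat.card (Patterns d N Ω) ≤ A.card ^ T.card := by
  choose ω hω hw using fun w : Patterns d N Ω => w.2
  have hinj : Injective fun (w : Patterns d N Ω) (t : T) => (⟨ω w t, hΩA _ (hω w) t⟩ : A) := by
    intro w w' h
    refine Subtype.ext (funext fun i => ?_)
    have := congrArg Subtype.val (congrFun h ⟨r i, hrT i⟩)
    simp only at this
    rw [hw w, hw w', hr _ (hω w), hr _ (hω w'), this]
  simpa [Nat.card_fun, Nat.card_eq_fintype_card] using Nat.card_le_card_of_injective _ hinj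

lemma log_card_patterns_le (hΩA : ∀ ω ∈ Ω, ∀ n, ω n ∈ A) (T : Finset (Fin d → ℤ))
    (r : (Fin d → Fin N) → Fin d → ℤ) (hrT : ∀ i, r i ∈ T)
    (hr : ∀ ω ∈ Ω, ∀ i, ω (windowPoint i) = ω (r i)) :
    Real.log (Nat.card (Patterns d N Ω)) ≤ T.card * Real.log A.card := by
  rw [← Real.log_pow]
  rcases (Nat.card (Patterns d N Ω)).eq_zero_or_pos with h | h
  · rw [h, Nat.cast_zero, Real.log_zero, ← Nat.cast_pow]
    exact Real.log_natCast_nonneg _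
  · exact Real.log_le_log (by exact_mod_cast h)
      (by exact_mod_cast card_patterns_le_pow hΩA T r hrT hr)

lemma two_pow_card_le_card_patterns {K : Type*} [Fintype K] [Finite (Patterns d N Ω)]
    (p : K → Fin d → ℤ) (hp : ∀ k j, 0 ≤ p k j ∧ p k j < N) (f : Bool → Fin d → ℤ)
    (hf : Injective f) (h : ∀ ζ : K → Bool, ∃ ω ∈ Ω, ∀ k, ω (p k) = f (ζ k)) :
    2 ^ Fintype.card K ≤ Nat.card (Patterns d N Ω) := by
  choose ω hω hωp using h
  choose i hi using fun k => exists_windowPoint_eq (hp k)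
  have hinj : Injective fun ζ : K → Bool =>
      (⟨fun n => ω ζ (windowPoint n), ω ζ, hω ζ, fun _ => rfl⟩ : Patterns d N Ω) := by
    intro ζ ζ' hζ
    funext k
    apply hf
    simpa [hi, hωp] using congrFun (congrArg Subtype.val hζ) (i k)
  simpa [Nat.card_fun, Nat.card_eq_fintype_card] using Nat.card_le_card_of_injective _ hinj

lemma log_card_patterns_le_volume_mul (hΩA : ∀ ω ∈ Ω, ∀ n, ω n ∈ A) :
    Real.log (Nat.card (Patterns d N Ω)) ≤ N ^ d * Real.log A.card := by
  classical
  refine (log_card_patterns_le hΩA (Finset.univ.image windowPoint) windowPoint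
    (fun i => Finset.mem_image_of_mem _ (Finset.mem_univ i)) fun _ _ _ => rfl).trans ?_
  gcongr
  exact_mod_cast Finset.card_image_le.trans (by simp)

lemma entd_eq_zero_of_le_div (C : ℝ)
    (h : ∀ N : ℕ, 1 ≤ N → Real.log (Nat.card (Patterns d N Ω)) / (N : ℝ) ^ d ≤ C / N) :
    entd d Ω = 0 := by
  refine Tendsto.limsup_eq (tendsto_of_tendsto_of_tendsto_of_le_of_le' tendsto_const_nhds
    (tendsto_const_div_atTop_nhds_zero_nat C) (Eventually.of_forall fun N => ?_)
    (eventually_atTop.2 ⟨1, h⟩))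
  exact div_nonneg (Real.log_natCast_nonneg _) (by positivity)

lemma entd_pos_of_two_pow_le (hΩA : ∀ ω ∈ Ω, ∀ n, ω n ∈ A) {K : ℕ} (hK : 0 < K)
    (h : ∀ M : ℕ, 2 ^ M ^ d ≤ Nat.card (Patterns d (K * M) Ω)) : 0 < entd d Ω := by
  have hbdd : IsBoundedUnder (· ≤ ·) atTop
      fun N : ℕ => Real.log (Nat.card (Patterns d N Ω)) / (N : ℝ) ^ d :=
    isBoundedUnder_of_eventually_le (a := Real.log A.card) <| Eventually.of_forall fun N =>
      div_le_of_le_mul₀ (by positivity) (Real.log_natCast_nonneg _)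
        (by simpa [mul_comm] using log_card_patterns_le_volume_mul (N := N) hΩA)
  have hfreq : ∃ᶠ N : ℕ in atTop,
      Real.log 2 / (K : ℝ) ^ d ≤ Real.log (Nat.card (Patterns d N Ω)) / (N : ℝ) ^ d := by
    refine frequently_atTop.2 fun N₀ => ⟨K * (N₀ + 1), by nlinarith, ?_⟩
    have hlog : (((N₀ + 1) ^ d : ℕ) : ℝ) * Real.log 2 ≤
        Real.log (Nat.card (Patterns d (K * (N₀ + 1)) Ω)) := by
      rw [← Real.log_pow]
      exact Real.log_le_log (by positivity) (by exact_mod_cast h (N₀ + 1))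
    rw [Nat.cast_mul, mul_pow, div_le_div_iff₀ (by positivity) (by positivity)]
    push_cast at hlog ⊢
    nlinarith [pow_pos (show (0 : ℝ) < K by exact_mod_cast hK) d]
  rw [entd_eq_limsup]
  exact (div_pos (Real.log_pos one_lt_two) (by positivity)).trans_le
    (le_limsup_of_frequently_le hfreq hbdd)

end Counting

section Periodic

variable {v : Fin d → ℤ} {js : Fin d}

noncomputable def slab (v : Fin d → ℤ) (js : Fin d) (L : ℕ) : Finset (Fin d → ℤ) :=
  Fintype.piFinset fun j => if j = js then Finset.Ico 0 (v js) else Finset.Icc (-L : ℤ) L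

lemma card_slab (L : ℕ) : (slab v js L).card = (v js).toNat * (2 * L + 1) ^ (d - 1) := by
  classical
  rw [slab, Fintype.card_piFinset, Fintype.prod_eq_mul_prod_compl js, if_pos rfl,
    Finset.prod_congr rfl fun j hj => by
      rw [if_neg (Finset.mem_compl.1 hj <| Finset.mem_singleton.2 ·)]]
  simp only [Int.card_Ico, sub_zero, Int.card_Icc, Finset.prod_const, Finset.card_compl,
    Finset.card_singleton, Fintype.card_fin]
  congr
  omega

lemma sub_ediv_smul_mem_slab (hv : 0 < v js) {V : ℕ} (hV : ∀ j, |v j| ≤ V) {N : ℕ}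
    {y : Fin d → ℤ} (hy : ∀ j, 0 ≤ y j ∧ y j < N) :
    y - (y js / v js) • v ∈ slab v js (N * (V + 1)) := by
  have hq : 0 ≤ y js / v js ∧ y js / v js ≤ N :=
    ⟨Int.ediv_nonneg (hy js).1 hv.le, (Int.ediv_le_self _ (hy js).1).trans (hy js).2.le⟩
  simp only [slab, Fintype.mem_piFinset, Pi.sub_apply, Pi.smul_apply, smul_eq_mul]
  intro j
  split_ifs with hj
  · subst hj
    rw [Finset.mem_Ico, mul_comm, ← Int.emod_def]
    exact ⟨Int.emod_nonneg _ hv.ne', Int.emod_lt_of_pos _ hv⟩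
  · have := abs_le.1 (hV j)
    rw [Finset.mem_Icc]
    push_cast
    constructor <;> nlinarith [hy j]

lemma entd_eq_zero_of_periodic {Ω : Set ((Fin d → ℤ) → (Fin d → ℤ))} {A : Finset (Fin d → ℤ)}
    (hΩA : ∀ ω ∈ Ω, ∀ n, ω n ∈ A) (hv : 0 < v js) (hper : ∀ ω ∈ Ω, Periodic ω v) :
    entd d Ω = 0 := by
  obtain ⟨V, hV⟩ := exists_abs_le v
  refine entd_eq_zero_of_le_div ((v js).toNat * (2 * V + 3 : ℝ) ^ (d - 1) * Real.log A.card)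
    fun N hN => ?_
  have hlog := log_card_patterns_le (N := N) hΩA (slab v js (N * (V + 1)))
    (fun i => windowPoint i - (windowPoint i js / v js) • v)
    (fun i => sub_ediv_smul_mem_slab hv hV (windowPoint_mem_Ico i))
    fun ω hω i => ((hper ω hω).sub_zsmul_eq _).symm
  have hwidth : (2 * (N * (V + 1)) + 1 : ℝ) ≤ (2 * V + 3) * N := by
    have : (1 : ℝ) ≤ N := by exact_mod_cast hN
    nlinarith
  have hvol : (N : ℝ) ^ d = N ^ (d - 1) * N := by
    rw [← pow_succ, Nat.sub_add_cancel (Fin.pos js)]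
  rw [card_slab] at hlog
  push_cast at hlog
  rw [div_le_div_iff₀ (by positivity) (by positivity), hvol]
  calc Real.log (Nat.card (Patterns d N Ω)) * N
      ≤ (v js).toNat * (2 * (N * (V + 1)) + 1 : ℝ) ^ (d - 1) * Real.log A.card * N := by gcongr
    _ ≤ (v js).toNat * ((2 * V + 3) * N : ℝ) ^ (d - 1) * Real.log A.card * N := by
      gcongr
    _ = _ := by rw [mul_pow]; ring

end Periodic

lemma periodic_of_mem_omegaA_pair {α β : Fin d → ℤ} (hαβ : α ≠ β) {ω : (Fin d → ℤ) → Fin d → ℤ}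
    (hω : ω ∈ OmegaA d {α, β}) : Periodic ω (β - α) := by
  obtain ⟨hmem, hinj, hsurj⟩ := hω
  have hval : ∀ n, ω n = α ∨ ω n = β := fun n => by simpa using hmem n
  intro n
  have not_both : ¬(ω n = β ∧ ω (n + (β - α)) = α) := fun ⟨hn, hn'⟩ => by
    have := @hinj n (n + (β - α)) (by simp only [hn, hn']; abel)
    exact hαβ (sub_eq_zero.1 (by simpa using this)).symm
  have not_neither : ¬(ω n = α ∧ ω (n + (β - α)) = β) := fun ⟨hn, hn'⟩ => by
    obtain ⟨m, hm⟩ := hsurj (n + β)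
    rcases hval m with hm' | hm'
    · obtain rfl : m = n + (β - α) := by
        simp only [hm'] at hm
        exact (eq_sub_of_add_eq hm).trans (add_sub_assoc _ _ _)
      exact hαβ (hm'.symm.trans hn')
    · obtain rfl : m = n := by
        simp only [hm'] at hm
        exact add_right_cancel hm
      exact hαβ (hn.symm.trans hm')
  rcases hval n with hn | hn <;> rcases hval (n + (β - α)) with hn' | hn' <;>
    simp_all

lemma entd_omegaA_eq_zero_of_card_le_two {A : Finset (Fin d → ℤ)} (hA : A.card ≤ 2) :
    entd d (OmegaA d A) = 0 := by
  classical
  have hΩA : ∀ ω ∈ OmegaA d A, ∀ n, ω n ∈ A := fun ω hω => hω.1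
  rcases hA.lt_or_eq with hA | hA
  · refine entd_eq_zero_of_le_div 0 fun N _ => ?_
    have hlogA : Real.log A.card = 0 := by
      interval_cases A.card <;> simp
    rw [zero_div]
    exact div_nonpos_of_nonpos_of_nonneg
      (by simpa [hlogA] using log_card_patterns_le_volume_mul (N := N) hΩA) (by positivity)
  · obtain ⟨α, β, hαβ, rfl⟩ := Finset.card_eq_two.1 hA
    obtain ⟨js, hjs⟩ := Function.ne_iff.1 hαβ
    rcases hjs.lt_or_gt with hlt | hlt
    · exact entd_eq_zero_of_periodic hΩA (v := β - α) (js := js) (by simpa using hlt)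
        fun ω hω => periodic_of_mem_omegaA_pair hαβ hω
    · rw [Finset.pair_comm] at hΩA ⊢
      exact entd_eq_zero_of_periodic hΩA (v := α - β) (js := js) (by simpa using hlt)
        fun ω hω => periodic_of_mem_omegaA_pair hαβ.symm hω

lemma eq_zero_of_zsmul_add_zsmul_eq_zero {G : Type*} [AddCommGroup G] [LinearOrder G]
    [IsOrderedAddMonoid G] {a b : G} (ha : 0 < a) (hb : 0 < b) (hab : a ≠ b) {P Q : ℤ}
    (h : P • a + Q • b = 0) (hPQ : |P - Q| ≤ 2) : P = 0 ∧ Q = 0 := by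
  have of_nonneg : ∀ {P Q : ℤ}, 0 ≤ P → 0 ≤ Q → P • a + Q • b = 0 → P = 0 ∧ Q = 0 := by
    intro P Q hP hQ h
    by_contra hPQ
    have : 0 < P • a + Q • b := by
      rcases hP.lt_or_eq with hP | rfl
      · exact add_pos_of_pos_of_nonneg (zsmul_pos ha hP) (zsmul_nonneg hb.le hQ)
      · simpa using zsmul_pos hb (lt_of_le_of_ne hQ (by omega))
    exact this.ne' h
  have h' : (-P) • a + (-Q) • b = 0 := by simp [neg_smul, ← neg_add, h]
  rcases le_total 0 P with hP | hP <;> rcases le_total 0 Q with hQ | hQ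
  · exact of_nonneg hP hQ h
  · rcases hP.lt_or_eq with hP' | rfl
    · rcases hQ.lt_or_eq with hQ' | rfl
      · obtain ⟨rfl, rfl⟩ : P = 1 ∧ Q = -1 := by rw [abs_le] at hPQ; omega
        exact absurd (sub_eq_zero.1 (by simpa [sub_eq_add_neg] using h)) hab
      · exact of_nonneg hP le_rfl h
    · simpa using of_nonneg le_rfl (neg_nonneg.2 hQ) h'
  · rcases hQ.lt_or_eq with hQ' | rfl
    · rcases hP.lt_or_eq with hP' | rfl
      · obtain ⟨rfl, rfl⟩ : P = -1 ∧ Q = 1 := by rw [abs_le] at hPQ; omega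
        exact absurd (sub_eq_zero.1 (by simpa [sub_eq_add_neg, add_comm] using h)).symm hab
      · exact of_nonneg le_rfl hQ h
    · simpa using of_nonneg (neg_nonneg.2 hP) le_rfl h'
  · simpa using of_nonneg (neg_nonneg.2 hP) (neg_nonneg.2 hQ) h'

lemma exists_lex_pos_steps {A : Finset (Fin d → ℤ)} (hA : 3 ≤ A.card) :
    ∃ x ∈ A, ∃ u w : Fin d → ℤ, x + u ∈ A ∧ x + w ∈ A ∧ 0 < toLex u ∧ 0 < toLex w ∧ u ≠ w := by
  obtain ⟨x, hx, hmin⟩ := A.exists_min_image toLex (Finset.card_pos.1 (by omega))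
  obtain ⟨y, hy, z, hz, hyz⟩ :=
    Finset.one_lt_card.1 (by rw [Finset.card_erase_of_mem hx]; omega : 1 < (A.erase x).card)
  have pos_of_mem_erase : ∀ a ∈ A.erase x, 0 < toLex (a - x) := fun a ha => by
    obtain ⟨hax, haA⟩ := Finset.mem_erase.1 ha
    rw [toLex_sub, sub_pos]
    exact (hmin a haA).lt_of_ne (toLex.injective.ne (Ne.symm hax))
  refine ⟨x, hx, y - x, z - x, by simpa using Finset.mem_of_mem_erase hy,
    by simpa using Finset.mem_of_mem_erase hz, pos_of_mem_erase y hy, pos_of_mem_erase z hz,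
    fun h => hyz (sub_left_injective h)⟩

section Tracks

variable {ι : Type*} {u w : Fin d → ℤ} {ρ : ι → Fin d → ℤ}

/-- With `s = u + w`, a coincidence between points of the diamonds `ρ i + k • s + {0, u, w}`
is a relation of this form, so these diamonds are pairwise disjoint. -/
def IsTrackLayout (s w : Fin d → ℤ) (ρ : ι → Fin d → ℤ) : Prop :=
  ∀ i i' (P R : ℤ), ρ i + P • s + R • w = ρ i' → |R| ≤ 2 → i = i' ∧ P = 0 ∧ R = 0

/-- Track `i` visits `ρ i + k • (u + w)` at time `2 * k` and, at time `2 * k + 1`, the middle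
point `+ u` or `+ w` selected by the bit `ξ (i, k)`. -/
def trackPoint (ρ : ι → Fin d → ℤ) (u w : Fin d → ℤ) (ξ : ι × ℤ → Bool) (p : ι × ℤ) :
    Fin d → ℤ :=
  ρ p.1 + (p.2 / 2) • (u + w) + (p.2 % 2) • cond (ξ (p.1, p.2 / 2)) u w

lemma exists_trackPoint_eq (ξ : ι × ℤ → Bool) (i : ι) (t : ℤ) :
    ∃ P R : ℤ, |R| ≤ 1 ∧ 2 * P + R = t ∧
      trackPoint ρ u w ξ (i, t) = ρ i + P • (u + w) + R • w := by
  have ht := Int.emod_two_eq_zero_or_one t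
  cases hb : ξ (i, t / 2)
  · exact ⟨t / 2, t % 2, abs_le.2 ⟨by omega, by omega⟩, by omega, by simp [trackPoint, hb]⟩
  · refine ⟨t / 2 + t % 2, -(t % 2), abs_le.2 ⟨by omega, by omega⟩, by omega, ?_⟩
    simp only [trackPoint, hb, cond_true]
    module

lemma trackPoint_injective (h : IsTrackLayout (u + w) w ρ) (ξ : ι × ℤ → Bool) :
    Injective (trackPoint ρ u w ξ) := by
  rintro ⟨i, t⟩ ⟨i', t'⟩ heq
  obtain ⟨P, R, hR, rfl, hp⟩ := exists_trackPoint_eq (ρ := ρ) (u := u) (w := w) ξ i t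
  obtain ⟨P', R', hR', rfl, hp'⟩ := exists_trackPoint_eq (ρ := ρ) (u := u) (w := w) ξ i' t'
  rw [hp, hp'] at heq
  obtain ⟨rfl, hP, hR⟩ := h i i' (P - P') (R - R') (by linear_combination (norm := module) heq)
    (by rw [abs_le] at *; omega)
  rw [sub_eq_zero.1 hP, sub_eq_zero.1 hR]

lemma trackPoint_succ_sub (ξ : ι × ℤ → Bool) (i : ι) (t : ℤ) :
    trackPoint ρ u w ξ (i, t + 1) - trackPoint ρ u w ξ (i, t) = u ∨
      trackPoint ρ u w ξ (i, t + 1) - trackPoint ρ u w ξ (i, t) = w := by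
  rcases Int.emod_two_eq_zero_or_one t with ht | ht
  · have h1 : (t + 1) / 2 = t / 2 := by omega
    have h2 : (t + 1) % 2 = 1 := by omega
    cases hb : ξ (i, t / 2) <;> simp [trackPoint, h1, h2, ht, hb]
  · have h1 : (t + 1) / 2 = t / 2 + 1 := by omega
    have h2 : (t + 1) % 2 = 0 := by omega
    cases hb : ξ (i, t / 2)
    · left
      simp only [trackPoint, h1, h2, ht, hb, cond_false, add_smul, one_smul, zero_smul, add_zero]
      abel
    · right
      simp only [trackPoint, h1, h2, ht, hb, cond_true, add_smul, one_smul, zero_smul, add_zero]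
      abel

open scoped Classical in
noncomputable def trackPerm (h : IsTrackLayout (u + w) w ρ) (ξ : ι × ℤ → Bool) :
    Equiv.Perm (Fin d → ℤ) :=
  Equiv.Perm.extendDomain (Equiv.prodCongr (Equiv.refl ι) (Equiv.addRight (1 : ℤ)))
    (Equiv.ofInjective _ (trackPoint_injective h ξ))

open scoped Classical in
lemma trackPerm_trackPoint (h : IsTrackLayout (u + w) w ρ) (ξ : ι × ℤ → Bool) (i : ι) (t : ℤ) :
    trackPerm h ξ (trackPoint ρ u w ξ (i, t)) = trackPoint ρ u w ξ (i, t + 1) :=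
  Equiv.Perm.extendDomain_apply_image _ _ (i, t)

open scoped Classical in
lemma trackPerm_sub_self (h : IsTrackLayout (u + w) w ρ) (ξ : ι × ℤ → Bool) (n : Fin d → ℤ) :
    trackPerm h ξ n - n = 0 ∨ trackPerm h ξ n - n = u ∨ trackPerm h ξ n - n = w := by
  by_cases hn : n ∈ Set.range (trackPoint ρ u w ξ)
  · obtain ⟨⟨i, t⟩, rfl⟩ := hn
    rw [trackPerm_trackPoint]
    exact Or.inr (trackPoint_succ_sub ξ i t)
  · left
    rw [sub_eq_zero]
    exact Equiv.Perm.extendDomain_apply_not_subtype _ _ hn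

lemma trackPerm_base (h : IsTrackLayout (u + w) w ρ) (ξ : ι × ℤ → Bool) (i : ι) (k : ℤ) :
    trackPerm h ξ (ρ i + k • (u + w)) = ρ i + k • (u + w) + cond (ξ (i, k)) u w := by
  have h0 : trackPoint ρ u w ξ (i, 2 * k) = ρ i + k • (u + w) := by simp [trackPoint]
  have h1 : trackPoint ρ u w ξ (i, 2 * k + 1) = ρ i + k • (u + w) + cond (ξ (i, k)) u w := by
    have e1 : (2 * k + 1) / 2 = k := by omega
    have e2 : (2 * k + 1) % 2 = 1 := by omega
    simp [trackPoint, e1, e2]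
  have := trackPerm_trackPoint h ξ i (2 * k)
  rwa [h0, h1] at this

lemma exists_mem_omegaA_of_isTrackLayout {A : Finset (Fin d → ℤ)} {x : Fin d → ℤ}
    (h : IsTrackLayout (u + w) w ρ) (hx : x ∈ A) (hxu : x + u ∈ A) (hxw : x + w ∈ A)
    (ξ : ι × ℤ → Bool) :
    ∃ ω ∈ OmegaA d A, ∀ i k, ω (ρ i + k • (u + w)) = x + cond (ξ (i, k)) u w := by
  refine ⟨fun n => x + (trackPerm h ξ n - n), ⟨fun n => ?_, ?_⟩,
    fun i k => by simp only [trackPerm_base, add_sub_cancel_left]⟩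
  · rcases trackPerm_sub_self h ξ n with h0 | h0 | h0 <;> simpa [h0]
  · convert (Equiv.addRight x).bijective.comp (trackPerm h ξ).bijective using 1
    funext n
    simp only [comp_apply, Equiv.coe_addRight]
    abel

end Tracks

lemma isTrackLayout_hyperplane {s w : Fin d → ℤ} {j₀ : Fin d} (hs : s j₀ ≠ 0)
    (hshort : ∀ P R : ℤ, P • s + R • w = 0 → |R| ≤ 2 → P = 0 ∧ R = 0) {c : ℤ}
    (hc : ∀ j, 2 * |s j₀ * w j - s j * w j₀| < c) (o : Fin d → ℤ) :
    IsTrackLayout s w fun y : {y : Fin d → ℤ // y j₀ = 0} => o + c • (y : Fin d → ℤ) := by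
  rintro ⟨y, hy⟩ ⟨y', hy'⟩ P R heq hR
  have hcoord : ∀ j, o j + c * y j + P * s j + R * w j = o j + c * y' j := fun j => by
    simpa using congrFun heq j
  have hj₀ := hcoord j₀
  rw [hy, hy'] at hj₀
  obtain rfl : y = y' := funext fun j => by
    have key : c * (s j₀ * (y' j - y j)) = R * (s j₀ * w j - s j * w j₀) := by
      linear_combination -s j₀ * hcoord j + s j * hj₀
    have hc0 : 0 < c := (hc j).trans_le' (by positivity)
    have hlt : c * |s j₀ * (y' j - y j)| < c * 1 := by
      rw [mul_one, ← abs_of_pos hc0, ← abs_mul, key, abs_mul, abs_of_pos hc0]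
      calc |R| * |s j₀ * w j - s j * w j₀| ≤ 2 * |s j₀ * w j - s j * w j₀| := by gcongr
        _ < c := hc j
    have := Int.abs_lt_one_iff.1 (lt_of_mul_lt_mul_left hlt hc0.le)
    rcases mul_eq_zero.1 this with h | h
    · exact absurd h hs
    · linarith
  exact ⟨rfl, hshort P R (by simpa [add_assoc] using heq) hR⟩

def hyperplaneSplit (j₀ : Fin d) (y : Fin d → ℤ) : {y : Fin d → ℤ // y j₀ = 0} × ℤ :=
  (⟨update y j₀ 0, update_self _ _ _⟩, y j₀)

lemma hyperplaneSplit_injective (j₀ : Fin d) : Injective (hyperplaneSplit j₀) := fun y y' h => by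
  simp only [hyperplaneSplit, Prod.mk.injEq, Subtype.mk.injEq] at h
  calc y = update (update y j₀ 0) j₀ (y j₀) := by simp
    _ = y' := by rw [h.1, h.2]; simp

lemma hyperplane_track_mem_Ico {s : Fin d → ℤ} {S : ℕ} (hS : ∀ j, |s j| ≤ S) {c : ℕ} (hc : 0 < c)
    {M : ℕ} (z : Fin d → Fin M) (j₀ j : Fin d) :
    let p := (fun _ => (M * S : ℤ)) + (c : ℤ) • update (windowPoint z) j₀ 0 + windowPoint z j₀ • s
    0 ≤ p j ∧ p j < (((c + 2 * S) * M : ℕ) : ℤ) := by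
  have hb := windowPoint_mem_Ico z j₀
  have ha : 0 ≤ update (windowPoint z) j₀ 0 j ∧ update (windowPoint z) j₀ 0 j < M := by
    rcases eq_or_ne j j₀ with rfl | hj
    · simp only [update_self]
      omega
    · simpa [hj] using windowPoint_mem_Ico z j
  have hs := abs_le.1 (hS j)
  have hbS := mul_le_mul_of_nonneg_right hb.2.le (Nat.cast_nonneg S : (0 : ℤ) ≤ S)
  have hca :=
    mul_le_mul_of_nonneg_left (Int.le_sub_one_of_lt ha.2) (Nat.cast_nonneg c : (0 : ℤ) ≤ c)
  simp only [Pi.add_apply, Pi.smul_apply, smul_eq_mul]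
  push_cast
  constructor
  · nlinarith [mul_nonneg hb.1 (by linarith : (0 : ℤ) ≤ s j + S)]
  · nlinarith [mul_nonneg hb.1 (by linarith : (0 : ℤ) ≤ S - s j)]

lemma exists_two_pow_le_card_patterns {A : Finset (Fin d → ℤ)} (hA : 3 ≤ A.card) :
    ∃ K : ℕ, 0 < K ∧ ∀ M : ℕ, 2 ^ M ^ d ≤ Nat.card (Patterns d (K * M) (OmegaA d A)) := by
  obtain ⟨x, hx, u, w, hxu, hxw, hu, hw, huw⟩ := exists_lex_pos_steps hA
  have hshort : ∀ P R : ℤ, P • (u + w) + R • w = 0 → |R| ≤ 2 → P = 0 ∧ R = 0 := by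
    intro P R h hR
    have h' : P • u + (P + R) • w = 0 := by rw [← h]; module
    have := eq_zero_of_zsmul_add_zsmul_eq_zero (P := P) (Q := P + R) hu hw
      (toLex.injective.ne huw) h' (by simpa using hR)
    omega
  obtain ⟨j₀, hj₀⟩ : ∃ j₀, (u + w) j₀ ≠ 0 :=
    Function.ne_iff.1 fun h => (add_pos hu hw).ne' (by rw [← toLex_add, h]; rfl)
  obtain ⟨W, hW⟩ := exists_abs_le fun j => (u + w) j₀ * w j - (u + w) j * w j₀
  obtain ⟨S, hS⟩ := exists_abs_le (u + w)
  refine ⟨2 * W + 1 + 2 * S, by omega, fun M => ?_⟩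
  have hlayout := isTrackLayout_hyperplane hj₀ hshort (c := (2 * W + 1 : ℕ))
    (fun j => by push_cast; linarith [hW j]) (fun _ => M * S)
  have hκ := (hyperplaneSplit_injective j₀).comp (windowPoint_injective (N := M))
  have := finite_patterns (N := (2 * W + 1 + 2 * S) * M) fun ω (hω : ω ∈ OmegaA d A) => hω.1
  rw [show M ^ d = Fintype.card (Fin d → Fin M) by simp]
  refine two_pow_card_le_card_patterns
    (fun z => (fun _ => (M * S : ℤ)) + ((2 * W + 1 : ℕ) : ℤ) • update (windowPoint z) j₀ 0 +
      windowPoint z j₀ • (u + w))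
    (fun z j => hyperplane_track_mem_Ico hS (by omega) z j₀ j)
    (fun b => x + cond b u w) (fun b b' hbb' => ?_) fun ζ => ?_
  · cases b <;> cases b' <;> simp only [cond_true, cond_false, add_right_inj] at hbb'
    exacts [rfl, absurd hbb'.symm huw, absurd hbb' huw, rfl]
  · obtain ⟨ω, hω, hread⟩ :=
      exists_mem_omegaA_of_isTrackLayout hlayout hx hxu hxw (extend _ ζ fun _ => false)
    refine ⟨ω, hω, fun z => ?_⟩
    rw [← hκ.extend_apply ζ (fun _ => false) z]
    exact hread (hyperplaneSplit j₀ (windowPoint z)).1 (windowPoint z j₀)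

theorem entd_omegaA_pos_of_three_le_card {A : Finset (Fin d → ℤ)} (hA : 3 ≤ A.card) :
    0 < entd d (OmegaA d A) := by
  obtain ⟨K, hK, h⟩ := exists_two_pow_le_card_patterns hA
  exact entd_pos_of_two_pow_le (fun ω hω => hω.1) hK h

end PermutationSubshift

theorem positive_entropy_iff_general (d : ℕ) (A : Finset (Fin d → ℤ)) :
    0 < entd d (OmegaA d A) ↔ 3 ≤ A.card := by
  refine ⟨fun h => ?_, PermutationSubshift.entd_omegaA_pos_of_three_le_card⟩
  by_contra! hA
  exact h.ne' (PermutationSubshift.entd_omegaA_eq_zero_of_card_le_two (by omega))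

/-- For `d ≥ 2`, `Ω_A` has positive topological entropy iff `|A| ≥ 3`. -/
theorem positive_entropy_iff (d : ℕ) (hd : 2 ≤ d) (A : Finset (Fin d → ℤ))
    (hA : A.Nonempty) :
    0 < entd d (OmegaA d A) ↔ 3 ≤ A.card :=
  positive_entropy_iff_general d A
end
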